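/- arXiv:2304.00810 — 9 statements merged into one kernel-verified Lean document; each statement's English description precedes it below -/
import Mathlib

section
/- Let G be a hypergraph on a finite set V and let ∼ be an equivalence relation on V such that ∼ ∈ E_⊂[G]. Then for all x, y ∈ V, the vertices π_∼(x) and π_∼(y) lie in the same connected component of the contracted hypergraph G/∼ if and only if x and y lie in the same connected component of G; in other words, the connected components of G/∼ are precisely the images under π_∼ of the connected components of G. -/
/-- One step in a path of a hypergraph with edge set `E`: `x` and `y` belong to a common edge. -/
def hstep {α : Type*} (E : Set (Set α)) (x y : α) : Prop := ∃ e ∈ E, x ∈ e ∧ y ∈ e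

/-- There is a path from `x` to `y` in the hypergraph with edge set `E`. -/
def hreach {α : Type*} (E : Set (Set α)) : α → α → Prop := Relation.ReflTransGen (hstep E)

/-- The hypergraph with edge set `E` and vertex set `S` is connected. -/
def connOn {α : Type*} (E : Set (Set α)) (S : Set α) : Prop := ∀ x ∈ S, ∀ y ∈ S, hreach E x y

/-- Edge set of `G|_⊂I`. -/
def subEdges {α : Type*} (E : Set (Set α)) (I : Set α) : Set (Set α) := {e ∈ E | e ⊆ I}

/-- Edge set of `G|_∩I`. -/
def capEdges {α : Type*} (E : Set (Set α)) (I : Set α) : Set (Set α) := {f | ∃ e ∈ E, f = e ∩ I}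

/-- The class of `x` for the relation `r`. -/
def classOf {α : Type*} (r : α → α → Prop) (x : α) : Set α := {y | r x y}

/-- Edge set of `G|_⊂∼`: union over the classes `C` of `∼` of the edge sets of `G|_⊂C`. -/
def subRelEdges {α : Type*} (E : Set (Set α)) (r : α → α → Prop) : Set (Set α) :=
  {e | ∃ x, e ∈ E ∧ e ⊆ classOf r x}

/-- Edge set of `G|_∩∼`: union over the classes `C` of `∼` of the edge sets of `G|_∩C`. -/
def capRelEdges {α : Type*} (E : Set (Set α)) (r : α → α → Prop) : Set (Set α) :=
  {f | ∃ x, ∃ e ∈ E, f = e ∩ classOf r x}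

/-- `∼ ∈ E_⊂[G]`: every class of `r` induces a connected `⊂`-sub-hypergraph. -/
def esubCond {α : Type*} (E : Set (Set α)) (r : α → α → Prop) : Prop :=
  ∀ x, connOn (subEdges E (classOf r x)) (classOf r x)

/-- `∼ ∈ E_∩[G]`: every class of `r` induces a connected `∩`-sub-hypergraph. -/
def ecapCond {α : Type*} (E : Set (Set α)) (r : α → α → Prop) : Prop :=
  ∀ x, connOn (capEdges E (classOf r x)) (classOf r x)

/-- Edge set of the contracted hypergraph `G/∼`. -/
def quotEdges {α : Type*} (s : Setoid α) (E : Set (Set α)) : Set (Set (Quotient s)) :=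
  {f | ∃ e ∈ E, f = Quotient.mk s '' e}

/-!
Mapping a path of `G` through `π_∼` gives a path of `G/∼`. Conversely, two consecutive vertices
of a path in `G/∼` are images of two vertices of a common edge `e` of `G`; since every class of
`∼` is connected inside `G`, the gap between the chosen representatives of consecutive classes
can be bridged inside that class, so the path lifts to a path of `G`.
-/

lemma hreach_mono {α : Type*} {E F : Set (Set α)} (h : E ⊆ F) {x y : α}
    (hr : hreach E x y) : hreach F x y :=
  Relation.ReflTransGen.mono (fun _ _ ⟨e, he, hx, hy⟩ => ⟨e, h he, hx, hy⟩) _ _ hr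

lemma hreach_of_esubCond {α : Type*} {E : Set (Set α)} {s : Setoid α}
    (hs : esubCond E s.r) {x y : α} (hxy : s.r x y) : hreach E x y :=
  hreach_mono (fun _ he => he.1) (hs x x (s.refl x) y hxy)

lemma hreach_quotEdges_of_hreach {α : Type*} {E : Set (Set α)} (s : Setoid α) {x y : α}
    (h : hreach E x y) : hreach (quotEdges s E) (Quotient.mk s x) (Quotient.mk s y) :=
  Relation.ReflTransGen.lift (Quotient.mk s) (fun _ _ ⟨e, he, hx, hy⟩ =>
    ⟨_, ⟨e, he, rfl⟩, Set.mem_image_of_mem _ hx, Set.mem_image_of_mem _ hy⟩) _ _ h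

lemma hreach_of_hreach_quotEdges {α : Type*} {E : Set (Set α)} {s : Setoid α}
    (hs : esubCond E s.r) {x : α} {q : Quotient s}
    (h : hreach (quotEdges s E) (Quotient.mk s x) q) :
    ∀ y, Quotient.mk s y = q → hreach E x y := by
  induction h with
  | refl => exact fun y hy => hreach_of_esubCond hs (Quotient.exact hy.symm)
  | tail _ hstep ih =>
    obtain ⟨_, ⟨e, he, rfl⟩, ⟨u, hu, rfl⟩, ⟨w, hw, rfl⟩⟩ := hstep
    intro y hy
    have hxw : hreach E x w := (ih u rfl).tail ⟨e, he, hu, hw⟩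
    exact hxw.trans (hreach_of_esubCond hs (Quotient.exact hy.symm))

theorem stmt5_general {V : Type*} (E : Set (Set V))
    (s : Setoid V)
    (hs : esubCond E s.r) :
    ∀ x y : V,
      hreach (quotEdges s E) (Quotient.mk s x) (Quotient.mk s y) ↔ hreach E x y :=
  fun _ y => ⟨fun h => hreach_of_hreach_quotEdges hs h y rfl, hreach_quotEdges_of_hreach s⟩

theorem stmt5 {V : Type*} [Fintype V] (E : Set (Set V))
    (hE0 : ∅ ∈ E) (hE1 : ∀ x : V, {x} ∈ E)
    (s : Setoid V)
    (hs : esubCond E s.r) :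
    ∀ x y : V,
      hreach (quotEdges s E) (Quotient.mk s x) (Quotient.mk s y) ↔ hreach E x y :=
  stmt5_general E s hs
end

section
/- Let G be a hypergraph on a finite set V and let ∼, ∼' be equivalence relations on V with ∼ ≤ ∼'. Then (∼' ∈ E_⊂[G] and ∼̄ ∈ E_⊂[G/∼']) if and only if (∼ ∈ E_⊂[G] and ∼' ∈ E_⊂[G|_⊂∼]); moreover, when these conditions hold, the hypergraphs (G/∼')|_⊂∼̄ and (G|_⊂∼)/∼' are equal. -/
section Stmt6Aux

variable {V : Type*} {E : Set (Set V)} {s' : Setoid V} {r : V → V → Prop}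

/-- The relation `r` transported to the quotient. -/
def rbar (s' : Setoid V) (r : V → V → Prop) : Quotient s' → Quotient s' → Prop :=
  fun a b => ∃ x y : V, a = Quotient.mk s' x ∧ b = Quotient.mk s' y ∧ r x y

lemma hreach_mono_s6 {E₁ E₂ : Set (Set V)} (h : E₁ ⊆ E₂) {x y : V} (hxy : hreach E₁ x y) :
    hreach E₂ x y :=
  Relation.ReflTransGen.mono (r := hstep E₁) (p := hstep E₂) (fun _ _ ⟨e, he, hm⟩ => ⟨e, h he, hm⟩) _ _ hxy

lemma class_rbar (hr : Equivalence r) (hle : ∀ x y : V, s'.r x y → r x y) (x : V) :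
    classOf (rbar s' r) (Quotient.mk s' x) = Quotient.mk s' '' classOf r x := by
  ext b
  constructor
  · rintro ⟨u, v, hu, rfl, huv⟩
    exact ⟨v, hr.trans (hle _ _ (Quotient.exact hu)) huv, rfl⟩
  · rintro ⟨v, hv, rfl⟩
    exact ⟨x, v, rfl, rfl, hv⟩

lemma image_sub (hr : Equivalence r) (hle : ∀ x y : V, s'.r x y → r x y) {e : Set V} {x : V}
    (h : Quotient.mk s' '' e ⊆ Quotient.mk s' '' classOf r x) : e ⊆ classOf r x := by
  intro z hz
  obtain ⟨w, hw, hwz⟩ := h ⟨z, hz, rfl⟩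
  exact hr.trans hw (hle _ _ (Quotient.exact hwz))

lemma subEdges_subRel (hle : ∀ x y : V, s'.r x y → r x y) (x : V) :
    subEdges (subRelEdges E r) (classOf s'.r x) = subEdges E (classOf s'.r x) := by
  ext e
  constructor
  · rintro ⟨⟨z, he, _⟩, hsub⟩
    exact ⟨he, hsub⟩
  · rintro ⟨he, hsub⟩
    exact ⟨⟨x, he, fun y hy => hle _ _ (hsub hy)⟩, hsub⟩

lemma hreach_lift (hr : Equivalence r) (hle : ∀ x y : V, s'.r x y → r x y) {x u v : V}
    (h : hreach (subEdges E (classOf r x)) u v) :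
    hreach (subEdges (quotEdges s' E) (Quotient.mk s' '' classOf r x))
      (Quotient.mk s' u) (Quotient.mk s' v) := by
  refine Relation.ReflTransGen.lift (Quotient.mk s') ?_ _ _ h
  rintro a b ⟨e, ⟨he, hsub⟩, ha, hb⟩
  exact ⟨Quotient.mk s' '' e, ⟨⟨e, he, rfl⟩, Set.image_mono hsub⟩, ⟨a, ha, rfl⟩, ⟨b, hb, rfl⟩⟩

lemma hreach_descend (hA : esubCond E s'.r) (hr : Equivalence r)
    (hle : ∀ x y : V, s'.r x y → r x y) {x u : V} (hxu : r x u)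
    {b : Quotient s'}
    (h : hreach (subEdges (quotEdges s' E) (Quotient.mk s' '' classOf r x))
      (Quotient.mk s' u) b) :
    ∃ v : V, b = Quotient.mk s' v ∧ r x v ∧ hreach (subEdges E (classOf r x)) u v := by
  induction h with
  | refl => exact ⟨u, rfl, hxu, Relation.ReflTransGen.refl⟩
  | tail h1 h2 ih =>
    obtain ⟨v, rfl, hxv, hpath⟩ := ih
    obtain ⟨f, ⟨⟨e, he, rfl⟩, hfsub⟩, hbf, hcf⟩ := h2
    have heC : e ⊆ classOf r x := image_sub hr hle hfsub
    obtain ⟨w, hwe, hwb⟩ := hbf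
    obtain ⟨w', hw'e, hw'c⟩ := hcf
    have hvw : s'.r v w := Setoid.symm (Quotient.exact hwb)
    -- path from v to w inside the s'-class of v
    have hCsub : classOf s'.r v ⊆ classOf r x := fun y hy => hr.trans hxv (hle _ _ hy)
    have hEsub : subEdges E (classOf s'.r v) ⊆ subEdges E (classOf r x) :=
      fun e' ⟨he', hs⟩ => ⟨he', hs.trans hCsub⟩
    have hvw' : hreach (subEdges E (classOf r x)) v w :=
      hreach_mono_s6 hEsub (hA v v (Setoid.refl v) w hvw)
    have hstep : hreach (subEdges E (classOf r x)) w w' :=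
      Relation.ReflTransGen.single ⟨e, ⟨he, heC⟩, hwe, hw'e⟩
    exact ⟨w', hw'c.symm, heC hw'e, (hpath.trans hvw').trans hstep⟩

end Stmt6Aux

theorem stmt6 {V : Type*} [Fintype V] (E : Set (Set V))
    (hE0 : ∅ ∈ E) (hE1 : ∀ x : V, {x} ∈ E)
    (s' : Setoid V) (r : V → V → Prop) (hr : Equivalence r)
    (hle : ∀ x y : V, s'.r x y → r x y) :
    ((esubCond E s'.r ∧
        esubCond (quotEdges s' E)
          (fun a b => ∃ x y : V, a = Quotient.mk s' x ∧ b = Quotient.mk s' y ∧ r x y)) ↔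
      (esubCond E r ∧ esubCond (subRelEdges E r) s'.r)) ∧
    ((esubCond E s'.r ∧
        esubCond (quotEdges s' E)
          (fun a b => ∃ x y : V, a = Quotient.mk s' x ∧ b = Quotient.mk s' y ∧ r x y)) →
      subRelEdges (quotEdges s' E)
          (fun a b => ∃ x y : V, a = Quotient.mk s' x ∧ b = Quotient.mk s' y ∧ r x y) =
        quotEdges s' (subRelEdges E r)) := by
  classical
  have key_edges : subRelEdges (quotEdges s' E)
      (fun a b => ∃ x y : V, a = Quotient.mk s' x ∧ b = Quotient.mk s' y ∧ r x y) =
      quotEdges s' (subRelEdges E r) := by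
    ext f
    constructor
    · rintro ⟨a, ⟨e, he, rfl⟩, hsub⟩
      obtain ⟨x, rfl⟩ := Quotient.exists_rep a
      rw [show (fun a b => ∃ x y : V, a = Quotient.mk s' x ∧ b = Quotient.mk s' y ∧ r x y)
          = rbar s' r from rfl, class_rbar hr hle] at hsub
      exact ⟨e, ⟨x, he, image_sub hr hle hsub⟩, rfl⟩
    · rintro ⟨e, ⟨x, he, hsub⟩, rfl⟩
      refine ⟨Quotient.mk s' x, ⟨e, he, rfl⟩, ?_⟩
      rw [show (fun a b => ∃ x y : V, a = Quotient.mk s' x ∧ b = Quotient.mk s' y ∧ r x y)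
          = rbar s' r from rfl, class_rbar hr hle]
      exact Set.image_mono hsub
  refine ⟨?_, fun _ => key_edges⟩
  constructor
  · rintro ⟨hA, hB⟩
    refine ⟨?_, ?_⟩
    · -- esubCond E r
      intro x u hu v hv
      have hB' := hB (Quotient.mk s' x)
      rw [show (fun a b => ∃ x y : V, a = Quotient.mk s' x ∧ b = Quotient.mk s' y ∧ r x y)
          = rbar s' r from rfl, class_rbar hr hle] at hB'
      have hq : hreach (subEdges (quotEdges s' E) (Quotient.mk s' '' classOf r x))
          (Quotient.mk s' u) (Quotient.mk s' v) :=
        hB' _ ⟨u, hu, rfl⟩ _ ⟨v, hv, rfl⟩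
      obtain ⟨v0, hv0, hxv0, hpath⟩ := hreach_descend hA hr hle hu hq
      have hvv0 : s'.r v0 v := Setoid.symm (Quotient.exact hv0)
      have hCsub : classOf s'.r v0 ⊆ classOf r x := fun y hy => hr.trans hxv0 (hle _ _ hy)
      have hEsub : subEdges E (classOf s'.r v0) ⊆ subEdges E (classOf r x) :=
        fun e' ⟨he', hs⟩ => ⟨he', hs.trans hCsub⟩
      exact hpath.trans (hreach_mono_s6 hEsub (hA v0 v0 (Setoid.refl v0) v hvv0))
    · -- esubCond (subRelEdges E r) s'.r
      intro x
      rw [subEdges_subRel hle]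
      exact hA x
  · rintro ⟨hC, hD⟩
    have hA : esubCond E s'.r := by
      intro x
      rw [← subEdges_subRel (E := E) (r := r) hle]
      exact hD x
    refine ⟨hA, ?_⟩
    intro a
    obtain ⟨x, rfl⟩ := Quotient.exists_rep a
    rw [show (fun a b => ∃ x y : V, a = Quotient.mk s' x ∧ b = Quotient.mk s' y ∧ r x y)
        = rbar s' r from rfl, class_rbar hr hle]
    rintro _ ⟨u, hu, rfl⟩ _ ⟨v, hv, rfl⟩
    exact hreach_lift hr hle (hC x u hu v hv)
end

section
/- Let G be a hypergraph on a finite set V. There exists a polynomial P with rational coefficients such that for every integer N ≥ 1, P(N) equals the number of ⊂-proper N-colourings of G, i.e. the number of maps f : V → {1,…,N} taking at least two distinct values on every nontrivial edge of G. -/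
/-!
A colouring is proper or not according to its kernel, the partition of `V` into colour classes.
The maps with a given kernel of `k` blocks are the injections of the blocks into the colours,
`N (N - 1) ⋯ (N - k + 1)` of them, so the count is a sum of falling factorials over the admissible
partitions.
-/

open Polynomial

namespace Setoid

variable {α β : Type*}

instance [Finite α] : Finite (Setoid α) :=
  Finite.of_injective (fun r : Setoid α => ⇑r) fun _ _ => eq_iff_rel_eq.2

def kerEqEquivEmbedding (r : Setoid α) : {f : α → β // ker f = r} ≃ (Quotient r ↪ β) where
  toFun f := ⟨Quotient.lift f.1 (f.2.ge : r ≤ ker f.1), (lift_injective_iff_ker_eq_of_le _).2 f.2⟩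
  invFun g := ⟨g ∘ Quotient.mk r, Setoid.ext fun _ _ => g.injective.eq_iff.trans Quotient.eq⟩
  left_inv _ := rfl
  right_inv g := by
    ext x
    induction x using Quotient.ind
    rfl

theorem card_ker_eq [Finite α] [Finite β] (r : Setoid α) :
    Nat.card {f : α → β // ker f = r} = (Nat.card β).descFactorial (Nat.card (Quotient r)) := by
  have := Fintype.ofFinite (Quotient r)
  have := Fintype.ofFinite β
  rw [Nat.card_congr (kerEqEquivEmbedding r), Nat.card_eq_fintype_card, Fintype.card_embedding_eq,
    Nat.card_eq_fintype_card, Nat.card_eq_fintype_card]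

def subtypeKerEquivSigma (p : Setoid α → Prop) :
    {f : α → β // p (ker f)} ≃ Σ r : {r // p r}, {f : α → β // ker f = r} where
  toFun f := ⟨⟨ker f.1, f.2⟩, ⟨f.1, rfl⟩⟩
  invFun x := ⟨x.2, by rw [x.2.2]; exact x.1.2⟩
  left_inv _ := rfl
  right_inv := by
    rintro ⟨⟨r, hr⟩, ⟨f, hf⟩⟩
    obtain rfl : ker f = r := hf
    rfl

theorem exists_polynomial_card_ker [Finite α] (p : Setoid α → Prop) :
    ∃ P : ℚ[X], ∀ (β : Type*) [Finite β],
      P.eval (Nat.card β : ℚ) = Nat.card {f : α → β // p (ker f)} := by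
  classical
  have := Fintype.ofFinite (Setoid α)
  refine ⟨∑ r : {r // p r}, descPochhammer ℚ (Nat.card (Quotient r.1)), fun β _ => ?_⟩
  rw [Nat.card_congr (subtypeKerEquivSigma p), Nat.card_sigma, eval_finsetSum]
  simp only [card_ker_eq, descPochhammer_eval_eq_descFactorial, Nat.cast_sum]

end Setoid

theorem stmt8_general {V : Type*} [Fintype V] (E : Set (Set V)) :
    ∃ P : Polynomial ℚ, ∀ N : ℕ, 1 ≤ N →
      P.eval (N : ℚ) =
        Nat.card {f : V → Fin N //
          ∀ e ∈ E, 2 ≤ e.ncard → ∃ x ∈ e, ∃ y ∈ e, f x ≠ f y} := by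
  obtain ⟨P, hP⟩ := Setoid.exists_polynomial_card_ker
    fun r : Setoid V => ∀ e ∈ E, 2 ≤ e.ncard → ∃ x ∈ e, ∃ y ∈ e, ¬ r x y
  exact ⟨P, fun N _ => by simpa using hP (Fin N)⟩

theorem stmt8 {V : Type*} [Fintype V] (E : Set (Set V))
    (hE0 : ∅ ∈ E) (hE1 : ∀ x : V, {x} ∈ E) :
    ∃ P : Polynomial ℚ, ∀ N : ℕ, 1 ≤ N →
      P.eval (N : ℚ) =
        Nat.card {f : V → Fin N //
          ∀ e ∈ E, 2 ≤ e.ncard → ∃ x ∈ e, ∃ y ∈ e, f x ≠ f y} :=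
  stmt8_general E
end

section
/- Let G be a hypergraph on a finite set V. There exists a polynomial P with rational coefficients such that for every integer N ≥ 1, P(N) equals the number of max-proper N-colourings of G, i.e. the number of maps f : V → {1,…,N} such that for every nontrivial edge e of G the maximum of f on e is attained at exactly one element of e. -/
open Finset

section Aux

variable {V : Type*} [Fintype V]

def MPGood (E : Set (Set V)) {N : ℕ} (f : V → Fin N) : Prop :=
  ∀ e ∈ E, 2 ≤ e.ncard → ∃! x, x ∈ e ∧ ∀ y ∈ e, f y ≤ f x

omit [Fintype V] in
lemma mpgood_comp (E : Set (Set V)) {k N : ℕ} (φ : Fin k → Fin N)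
    (hφ : ∀ a b, φ a ≤ φ b ↔ a ≤ b) (g : V → Fin k) :
    MPGood E (φ ∘ g) ↔ MPGood E g := by
  unfold MPGood
  refine forall₂_congr fun e he => imp_congr Iff.rfl (existsUnique_congr fun x => ?_)
  simp only [Function.comp_apply]
  exact and_congr Iff.rfl (forall₂_congr fun y hy => hφ _ _)

noncomputable def mpFiberEquiv (E : Set (Set V)) {N : ℕ} (s : Finset (Fin N)) :
    {f : V → Fin N // MPGood E f ∧ image f univ = s} ≃
    {g : V → Fin s.card // Function.Surjective g ∧ MPGood E g} := by
  classical
  let iso := s.orderIsoOfFin rfl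
  have hmem : ∀ (f : V → Fin N), image f univ = s → ∀ x, f x ∈ s :=
    fun f h x => h ▸ mem_image_of_mem f (mem_univ x)
  let ψ : Fin s.card → Fin N := fun i => (iso i : Fin N)
  have hψ : ∀ a b, ψ a ≤ ψ b ↔ a ≤ b := fun a b => by
    simp only [ψ, Subtype.coe_le_coe, iso.le_iff_le]
  let F : {f : V → Fin N // MPGood E f ∧ image f univ = s} → V → Fin s.card :=
    fun p x => iso.symm ⟨p.1 x, hmem p.1 p.2.2 x⟩
  have hcomp : ∀ p, ψ ∘ F p = p.1 := by
    intro p; funext x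
    simp only [ψ, F, Function.comp_apply]
    exact congrArg Subtype.val (iso.apply_symm_apply _)
  have hFs : ∀ (p) (x : V) (j : Fin s.card), p.1 x = ↑(iso j) → F p x = j := by
    intro p x j h
    have h2 : (⟨p.1 x, hmem p.1 p.2.2 x⟩ : {a // a ∈ s}) = iso j := Subtype.ext h
    simp only [F, h2, iso.symm_apply_apply]
  refine
  { toFun := fun p => ⟨F p, ?_, ?_⟩
    invFun := fun q => ⟨ψ ∘ q.1, ?_, ?_⟩
    left_inv := fun p => Subtype.ext (hcomp p)
    right_inv := ?_ }
  · -- surjectivity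
    intro i
    have hb : ((iso i : s) : Fin N) ∈ image p.1 univ := by
      rw [p.2.2]; exact (iso i).2
    obtain ⟨x, -, hx⟩ := mem_image.1 hb
    exact ⟨x, hFs p x i hx⟩
  · -- goodness of F p
    have h := p.2.1
    rw [← hcomp p] at h
    exact (mpgood_comp E ψ hψ (F p)).1 h
  · -- goodness of ψ ∘ q.1
    exact (mpgood_comp E ψ hψ q.1).2 q.2.2
  · -- image = s
    apply Finset.Subset.antisymm
    · intro b hb
      obtain ⟨x, -, hx⟩ := mem_image.1 hb
      rw [← hx]
      exact (iso (q.1 x)).2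
    · intro b hb
      obtain ⟨x, hx⟩ := q.2.1 (iso.symm ⟨b, hb⟩)
      refine mem_image.2 ⟨x, mem_univ x, ?_⟩
      simp only [Function.comp_apply, ψ, hx, iso.apply_symm_apply]
  · -- right inverse
    intro q
    apply Subtype.ext
    funext x
    exact hFs _ x (q.1 x) rfl

noncomputable def mpCount (E : Set (Set V)) (k : ℕ) : ℕ :=
  Nat.card {g : V → Fin k // Function.Surjective g ∧ MPGood E g}

lemma mpCount_eq_zero (E : Set (Set V)) {k : ℕ} (hk : Fintype.card V < k) :
    mpCount E k = 0 := by
  rw [mpCount, Nat.card_eq_zero]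
  left
  constructor
  rintro ⟨g, hg, -⟩
  have := Fintype.card_le_of_surjective g hg
  simp at this
  omega

lemma mpCount_main (E : Set (Set V)) (N : ℕ) :
    Nat.card {f : V → Fin N // MPGood E f} =
      ∑ k ∈ Finset.range (Fintype.card V + 1), N.choose k * mpCount E k := by
  classical
  have e1 : {f : V → Fin N // MPGood E f} ≃
      Σ s : Finset (Fin N), {f : V → Fin N // MPGood E f ∧ image f univ = s} := by
    refine (Equiv.sigmaFiberEquiv (fun f : {f : V → Fin N // MPGood E f} =>
      image f.1 univ)).symm.trans (Equiv.sigmaCongrRight fun s => ?_)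
    exact (Equiv.subtypeSubtypeEquivSubtypeInter (MPGood E) (fun f => image f univ = s))
  rw [Nat.card_congr e1, Nat.card_eq_fintype_card, Fintype.card_sigma]
  have e2 : ∀ s : Finset (Fin N),
      Fintype.card {f : V → Fin N // MPGood E f ∧ image f univ = s} = mpCount E s.card := by
    intro s
    rw [← Nat.card_eq_fintype_card, Nat.card_congr (mpFiberEquiv E s), mpCount]
  simp_rw [e2]
  have h3 : ∑ s : Finset (Fin N), mpCount E s.card =
      ∑ k ∈ Finset.range (N + 1), ∑ s ∈ univ.filter (fun s : Finset (Fin N) => s.card = k),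
        mpCount E s.card := by
    rw [Finset.sum_fiberwise_of_maps_to]
    intro s _
    simp only [Finset.mem_range, Nat.lt_succ_iff]
    simpa using card_le_card (subset_univ s)
  rw [h3]
  have h4 : ∀ k, ∑ s ∈ univ.filter (fun s : Finset (Fin N) => s.card = k),
      mpCount E s.card = N.choose k * mpCount E k := by
    intro k
    rw [Finset.sum_congr rfl (fun s hs => by rw [(mem_filter.1 hs).2]), Finset.sum_const,
      smul_eq_mul]
    congr 1
    rw [← Finset.powerset_univ, ← Finset.powersetCard_eq_filter, Finset.card_powersetCard]
    simp
  simp_rw [h4]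
  rw [show ∑ k ∈ Finset.range (N + 1), N.choose k * mpCount E k
      = ∑ k ∈ Finset.range (N + Fintype.card V + 1), N.choose k * mpCount E k from
    Finset.sum_subset (Finset.range_subset_range.2 (by omega)) (fun k hk1 hk => by
      rw [Nat.choose_eq_zero_of_lt (by simp only [Finset.mem_range] at hk ⊢; omega), zero_mul])]
  exact (Finset.sum_subset (Finset.range_subset_range.2 (by omega)) (fun k hk1 hk => by
      rw [mpCount_eq_zero E (by simp only [Finset.mem_range] at hk ⊢; omega), mul_zero])).symm

end Aux

theorem stmt10 {V : Type*} [Fintype V] (E : Set (Set V))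
    (hE0 : ∅ ∈ E) (hE1 : ∀ x : V, {x} ∈ E) :
    ∃ P : Polynomial ℚ, ∀ N : ℕ, 1 ≤ N →
      P.eval (N : ℚ) =
        Nat.card {f : V → Fin N //
          ∀ e ∈ E, 2 ≤ e.ncard → ∃! x, x ∈ e ∧ ∀ y ∈ e, f y ≤ f x} := by
  classical
  refine ⟨∑ k ∈ Finset.range (Fintype.card V + 1),
    Polynomial.C ((mpCount E k : ℚ) / (k.factorial : ℚ)) * descPochhammer ℚ k, fun N _ => ?_⟩
  have h : Nat.card {f : V → Fin N //
      ∀ e ∈ E, 2 ≤ e.ncard → ∃! x, x ∈ e ∧ ∀ y ∈ e, f y ≤ f x} =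
      ∑ k ∈ Finset.range (Fintype.card V + 1), N.choose k * mpCount E k := mpCount_main E N
  rw [h]
  push_cast
  rw [Polynomial.eval_finset_sum]
  refine Finset.sum_congr rfl fun k _ => ?_
  rw [Polynomial.eval_mul, Polynomial.eval_C, descPochhammer_eval_eq_descFactorial,
    Nat.descFactorial_eq_factorial_mul_choose]
  push_cast
  have hf : (k.factorial : ℚ) ≠ 0 := by exact_mod_cast k.factorial_ne_zero
  field_simp
end

section
/- Let G be a hypergraph on a nonempty finite set V of cardinality n, and let P be a polynomial with rational coefficients such that for every integer N ≥ 1, P(N) equals the number of ⊂-proper N-colourings of G. Then P has integer coefficients, P is monic of degree n, and the coefficient of X^{n−1} in P equals minus the number of edges of G of cardinality 2. -/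
open Polynomial Finset

namespace Stmt11Aux

open scoped Classical

variable {V : Type*} [Fintype V]

/-- relation generated by requiring each edge of `S` monochromatic -/
def rel (S : Finset (Set V)) (x y : V) : Prop := ∃ e ∈ S, x ∈ e ∧ y ∈ e

def st (S : Finset (Set V)) : Setoid V := Relation.EqvGen.setoid (rel S)

lemma st_ind {S : Finset (Set V)} {x y : V} (h : (st S).r x y) :
    Relation.EqvGen (rel S) x y := h

noncomputable def cc (S : Finset (Set V)) : ℕ := Nat.card (Quotient (st S))

lemma st_rel {S : Finset (Set V)} {x y : V} {e : Set V} (he : e ∈ S) (hx : x ∈ e)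
    (hy : y ∈ e) : (st S).r x y := Relation.EqvGen.rel _ _ ⟨e, he, hx, hy⟩

lemma card_const (S : Finset (Set V)) (N : ℕ) :
    Nat.card {f : V → Fin N // ∀ e ∈ S, ∀ x ∈ e, ∀ y ∈ e, f x = f y} = N ^ cc S := by
  classical
  have hcongr : ∀ (f : V → Fin N), (∀ e ∈ S, ∀ x ∈ e, ∀ y ∈ e, f x = f y) →
      ∀ x y, Relation.EqvGen (rel S) x y → f x = f y := by
    intro f hf x y h
    induction h with
    | rel a b hab => obtain ⟨e, he, ha, hb⟩ := hab; exact hf e he a ha b hb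
    | refl => rfl
    | symm a b _ ih => exact ih.symm
    | trans a b c _ _ ih1 ih2 => exact ih1.trans ih2
  have hbij : Function.Bijective
      (fun g : Quotient (st S) → Fin N =>
        (⟨fun v => g ⟦v⟧, fun e he x hx y hy => congrArg g
          (Quotient.sound (st_rel he hx hy))⟩ :
          {f : V → Fin N // ∀ e ∈ S, ∀ x ∈ e, ∀ y ∈ e, f x = f y})) := by
    constructor
    · intro g1 g2 h
      funext q
      induction q using Quotient.ind with
      | _ v => exact congrArg (fun t => (Subtype.val t) v) h
    · rintro ⟨f, hf⟩
      refine ⟨Quotient.lift f (hcongr f hf), rfl⟩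
  rw [← Nat.card_eq_of_bijective _ hbij, Nat.card_fun, Nat.card_eq_fintype_card,
    Fintype.card_fin, cc]

lemma cc_le (S : Finset (Set V)) : cc S ≤ Fintype.card V := by
  rw [cc, ← Nat.card_eq_fintype_card]
  exact Nat.card_le_card_of_surjective _ (Quotient.mk_surjective)

lemma eqvGen_empty {a b : V} (h : Relation.EqvGen (rel (∅ : Finset (Set V))) a b) : a = b := by
  induction h with
  | rel a b hab => exact absurd hab (by simp [rel])
  | refl => rfl
  | symm a b _ ih => exact ih.symm
  | trans a b c _ _ ih1 ih2 => exact ih1.trans ih2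

lemma cc_empty : cc (∅ : Finset (Set V)) = Fintype.card V := by
  rw [cc, ← Nat.card_eq_fintype_card]
  refine (Nat.card_eq_of_bijective (Quotient.mk _) ⟨?_, Quotient.mk_surjective⟩).symm
  intro a b h
  exact eqvGen_empty (st_ind (Quotient.exact h))

/-- codim-1 bound -/
lemma quot_le_one (s : Setoid V) (a b : V) (hab : a ≠ b) (h : s.r a b) :
    Nat.card (Quotient s) ≤ Fintype.card V - 1 := by
  classical
  have hsurj : Function.Surjective
      (fun v : {v : V // v ≠ b} => (⟦v.1⟧ : Quotient s)) := by
    intro q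
    induction q using Quotient.ind with
    | _ v =>
      by_cases hv : v = b
      · exact ⟨⟨a, hab⟩, by rw [hv] at *; exact Quotient.sound h⟩
      · exact ⟨⟨v, hv⟩, rfl⟩
  have := Nat.card_le_card_of_surjective _ hsurj
  have hc : Nat.card {v : V // v ≠ b} = Fintype.card V - 1 := by
    rw [Nat.card_eq_fintype_card]
    simpa using Fintype.card_subtype_compl (fun v : V => v = b)
  rwa [hc] at this

/-- codim-2 bound -/
lemma quot_le_two (s : Setoid V) (y w x z : V) (hyw : y ≠ w) (hxy : x ≠ y) (hxw : x ≠ w)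
    (hzy : z ≠ y) (hzw : z ≠ w) (hx : s.r x y) (hz : s.r z w) :
    Nat.card (Quotient s) ≤ Fintype.card V - 2 := by
  classical
  have hsurj : Function.Surjective
      (fun v : {v : V // ¬(v = y ∨ v = w)} => (⟦v.1⟧ : Quotient s)) := by
    intro q
    induction q using Quotient.ind with
    | _ v =>
      by_cases hv : v = y
      · exact ⟨⟨x, by simp [hxy, hxw]⟩, by rw [hv] at *; exact Quotient.sound hx⟩
      by_cases hv' : v = w
      · exact ⟨⟨z, by simp [hzy, hzw]⟩, by rw [hv'] at *; exact Quotient.sound hz⟩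
      · exact ⟨⟨v, by simp [hv, hv']⟩, rfl⟩
  have := Nat.card_le_card_of_surjective _ hsurj
  have hcard2 : Fintype.card {v : V // v = y ∨ v = w} = 2 := by
    rw [Fintype.card_subtype]
    have : univ.filter (fun v : V => v = y ∨ v = w) = {y, w} := by ext v; simp
    rw [this, card_insert_of_notMem (by simp [hyw]), card_singleton]
  have hc : Nat.card {v : V // ¬(v = y ∨ v = w)} = Fintype.card V - 2 := by
    rw [Nat.card_eq_fintype_card, Fintype.card_subtype_compl, hcard2]
  rwa [hc] at this

lemma eqvGen_singleton {e : Set V} {u v : V} (h : Relation.EqvGen (rel ({e} : Finset (Set V))) u v) :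
    u = v ∨ (u ∈ e ∧ v ∈ e) := by
  induction h with
  | rel a b hab =>
    obtain ⟨e', he', ha, hb⟩ := hab
    rw [Finset.mem_singleton] at he'
    subst he'
    exact Or.inr ⟨ha, hb⟩
  | refl => exact Or.inl rfl
  | symm a b _ ih => exact ih.imp Eq.symm And.symm
  | trans a b c _ _ ih1 ih2 =>
    rcases ih1 with rfl | ⟨ha, hb⟩
    · exact ih2
    · rcases ih2 with rfl | ⟨_, hc⟩
      · exact Or.inr ⟨ha, hb⟩
      · exact Or.inr ⟨ha, hc⟩

lemma cc_singleton_two {e : Set V} (h2 : e.ncard = 2) :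
    cc ({e} : Finset (Set V)) = Fintype.card V - 1 := by
  classical
  obtain ⟨a, b, hab, rfl⟩ := Set.ncard_eq_two.mp h2
  have hbij : Function.Bijective
      (fun v : {v : V // v ≠ b} => (⟦v.1⟧ : Quotient (st ({({a, b} : Set V)} : Finset (Set V))))) := by
    constructor
    · rintro ⟨u, hu⟩ ⟨v, hv⟩ h
      apply Subtype.ext
      have := eqvGen_singleton (st_ind (Quotient.exact h))
      rcases this with h' | ⟨h1, h2'⟩
      · exact h'
      · simp only [Set.mem_insert_iff, Set.mem_singleton_iff] at h1 h2'
        rcases h1 with rfl | rfl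
        · rcases h2' with rfl | rfl
          · rfl
          · exact absurd rfl hv
        · exact absurd rfl hu
    · intro q
      induction q using Quotient.ind with
      | _ v =>
        by_cases hv : v = b
        · refine ⟨⟨a, hab⟩, ?_⟩
          rw [hv] at *
          exact Quotient.sound (st_rel (Finset.mem_singleton_self _) (by simp) (by simp))
        · exact ⟨⟨v, hv⟩, rfl⟩
  rw [cc, ← Nat.card_eq_of_bijective _ hbij, Nat.card_eq_fintype_card]
  simpa using Fintype.card_subtype_compl (fun v : V => v = b)


section IE
variable (E : Set (Set V))

noncomputable def E' : Finset (Set V) := (Set.toFinite {e ∈ E | 2 ≤ e.ncard}).toFinset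

lemma mem_E' {e : Set V} : e ∈ E' E ↔ e ∈ E ∧ 2 ≤ e.ncard := by
  simp [E', Set.Finite.mem_toFinset, Set.mem_setOf_eq]

lemma card_proper (N : ℕ) :
    ((Nat.card {f : V → Fin N //
        ∀ e ∈ E, 2 ≤ e.ncard → ∃ x ∈ e, ∃ y ∈ e, f x ≠ f y}) : ℚ)
      = ∑ S ∈ (E' E).powerset, (-1 : ℚ) ^ S.card * (N : ℚ) ^ cc S := by
  classical
  set ind : Set V → (V → Fin N) → ℚ :=
    fun e f => if (∀ x ∈ e, ∀ y ∈ e, f x = f y) then 1 else 0 with hind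
  have step1 : ∀ S ∈ (E' E).powerset,
      (-1 : ℚ) ^ S.card * ((N : ℚ)) ^ cc S = ∑ f : V → Fin N, ∏ e ∈ S, -ind e f := by
    intro S _
    have h1 : ∀ f : V → Fin N, ∏ e ∈ S, ind e f
        = if (∀ e ∈ S, ∀ x ∈ e, ∀ y ∈ e, f x = f y) then (1 : ℚ) else 0 := by
      intro f
      rw [hind]
      simp only [Finset.prod_boole]
      simp
    have h2 : ((N : ℚ)) ^ cc S = ∑ f : V → Fin N, ∏ e ∈ S, ind e f := by
      calc ((N : ℚ)) ^ cc S = ((N ^ cc S : ℕ) : ℚ) := by push_cast; ring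
        _ = ((Nat.card {f : V → Fin N // ∀ e ∈ S, ∀ x ∈ e, ∀ y ∈ e, f x = f y} : ℕ) : ℚ) := by
            rw [card_const]
        _ = ∑ f : V → Fin N, ∏ e ∈ S, ind e f := by
            rw [Nat.card_eq_fintype_card, Fintype.card_subtype]
            rw [Finset.sum_congr rfl (fun f _ => h1 f), Finset.sum_boole]
    rw [h2, Finset.mul_sum]
    refine Finset.sum_congr rfl (fun f _ => ?_)
    rw [eq_comm]
    calc ∏ e ∈ S, -ind e f = ∏ e ∈ S, (-1 : ℚ) * ind e f :=
          Finset.prod_congr rfl fun e _ => by ring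
      _ = (-1 : ℚ) ^ S.card * ∏ e ∈ S, ind e f := by
          rw [Finset.prod_mul_distrib, Finset.prod_const]
  rw [Finset.sum_congr rfl step1, Finset.sum_comm]
  have step3 : ∀ f : V → Fin N,
      ∑ S ∈ (E' E).powerset, ∏ e ∈ S, -ind e f
        = if (∀ e ∈ E, 2 ≤ e.ncard → ∃ x ∈ e, ∃ y ∈ e, f x ≠ f y) then (1 : ℚ) else 0 := by
    intro f
    have hexp := Finset.prod_add (fun e => -ind e f) (fun _ => (1 : ℚ)) (E' E)
    simp only [Finset.prod_const_one, mul_one] at hexp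
    rw [← hexp]
    have h4 : ∀ e ∈ E' E, -ind e f + 1
        = if ¬(∀ x ∈ e, ∀ y ∈ e, f x = f y) then (1 : ℚ) else 0 := by
      intro e _
      by_cases h : ∀ x ∈ e, ∀ y ∈ e, f x = f y
      · simp only [hind, if_pos h, if_neg (not_not_intro h)]; ring
      · simp only [hind, if_neg h, if_pos h]; ring
    rw [Finset.prod_congr rfl h4, Finset.prod_boole]
    congr 1
    simp only [eq_iff_iff]
    constructor
    · intro h e heE hcard
      have := h e ((mem_E' E).mpr ⟨heE, hcard⟩)
      push_neg at this
      obtain ⟨x, hx, y, hy, hxy⟩ := this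
      exact ⟨x, hx, y, hy, hxy⟩
    · intro h e he
      obtain ⟨heE, hcard⟩ := (mem_E' E).mp he
      obtain ⟨x, hx, y, hy, hxy⟩ := h e heE hcard
      intro hc
      exact hxy (hc x hx y hy)
  rw [Finset.sum_congr rfl (fun f _ => step3 f), Finset.sum_boole,
    Nat.card_eq_fintype_card, Fintype.card_subtype]

noncomputable def Q : ℚ[X] := ∑ S ∈ (E' E).powerset, C ((-1 : ℚ) ^ S.card) * X ^ cc S

lemma Q_eval (x : ℚ) : (Q E).eval x = ∑ S ∈ (E' E).powerset, (-1 : ℚ) ^ S.card * x ^ cc S := by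
  simp [Q, eval_finset_sum]

lemma Q_coeff (i : ℕ) : (Q E).coeff i
    = ∑ S ∈ (E' E).powerset, if i = cc S then (-1 : ℚ) ^ S.card else 0 := by
  rw [Q, finset_sum_coeff]
  refine Finset.sum_congr rfl fun S _ => ?_
  rw [coeff_C_mul, coeff_X_pow]
  split_ifs <;> ring

lemma cc_le_pred {S : Finset (Set V)} (hS : S ∈ (E' E).powerset) {e : Set V} (he : e ∈ S) :
    cc S ≤ Fintype.card V - 1 := by
  have he' : e ∈ E' E := Finset.mem_powerset.mp hS he
  obtain ⟨-, hcard⟩ := (mem_E' E).mp he'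
  obtain ⟨a, ha, b, hb, hab⟩ := (Set.one_lt_ncard (Set.toFinite e)).mp hcard
  exact quot_le_one _ a b hab (st_rel he ha hb)

lemma two_le_card_of_quot_le_two {s : Setoid V} {y w x z : V} (hyw : y ≠ w) (hxy : x ≠ y)
    (hxw : x ≠ w) (hzy : z ≠ y) (hzw : z ≠ w) (hx : s.r x y) (hz : s.r z w) :
    Nat.card (Quotient s) + 2 ≤ Fintype.card V := by
  have h1 := quot_le_two s y w x z hyw hxy hxw hzy hzw hx hz
  have h2 : 2 ≤ Fintype.card V := Fintype.one_lt_card_iff_nontrivial.mpr ⟨⟨y, w, hyw⟩⟩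
  omega

lemma exists_pair_ncard {e : Set V} (h : 2 ≤ e.ncard) : ∃ a ∈ e, ∃ b ∈ e, a ≠ b :=
  (Set.one_lt_ncard (Set.toFinite e)).mp h

/-- auxiliary asymmetric case of the two-distinct-edges bound -/
lemma cc_pair_aux {S : Finset (Set V)} {e1 e2 : Set V} (h1 : e1 ∈ S) (h2 : e2 ∈ S)
    (hc2 : 2 ≤ e2.ncard) {a b : V} (ha1 : a ∈ e1) (ha2 : a ∈ e2) (hb1 : b ∈ e1)
    (hb2 : b ∉ e2) : cc S + 2 ≤ Fintype.card V := by
  obtain ⟨c, hc, hca⟩ : ∃ c ∈ e2, c ≠ a := Set.exists_ne_of_one_lt_ncard hc2 a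
  refine two_le_card_of_quot_le_two (y := b) (w := c) (x := a) (z := a)
    (fun h => hb2 (h ▸ hc)) (fun h => hb2 (h ▸ ha2)) (Ne.symm hca)
    (fun h => hb2 (h ▸ ha2)) (Ne.symm hca) (st_rel h1 ha1 hb1) (st_rel h2 ha2 hc)

lemma cc_pair {S : Finset (Set V)} (hS : S ∈ (E' E).powerset) {e1 e2 : Set V} (h1 : e1 ∈ S)
    (h2 : e2 ∈ S) (hne : e1 ≠ e2) : cc S + 2 ≤ Fintype.card V := by
  have hcard : ∀ e ∈ S, 2 ≤ e.ncard := fun e he =>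
    ((mem_E' E).mp (Finset.mem_powerset.mp hS he)).2
  by_cases hdisj : (e1 ∩ e2).Nonempty
  · obtain ⟨a, ha1, ha2⟩ := hdisj
    by_cases hsub : ∃ b ∈ e1, b ∉ e2
    · obtain ⟨b, hb1, hb2⟩ := hsub
      exact cc_pair_aux h1 h2 (hcard e2 h2) ha1 ha2 hb1 hb2
    · push_neg at hsub
      obtain ⟨b, hb2, hb1⟩ : ∃ b ∈ e2, b ∉ e1 := by
        by_contra hcon
        push_neg at hcon
        exact hne (Set.Subset.antisymm hsub hcon)
      exact cc_pair_aux h2 h1 (hcard e1 h1) ha2 ha1 hb2 hb1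
  · rw [Set.not_nonempty_iff_eq_empty] at hdisj
    obtain ⟨a, ha, b, hb, hab⟩ := exists_pair_ncard (hcard e1 h1)
    obtain ⟨c, hc, d, hd, hcd⟩ := exists_pair_ncard (hcard e2 h2)
    have hmem : ∀ x ∈ e1, ∀ y ∈ e2, x ≠ y := by
      intro x hx y hy hxy
      have : x ∈ e1 ∩ e2 := ⟨hx, hxy ▸ hy⟩
      simp [hdisj] at this
    exact two_le_card_of_quot_le_two (y := b) (w := d) (x := a) (z := c)
      (hmem b hb d hd) hab (hmem a ha d hd) (Ne.symm (hmem b hb c hc)) hcd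
      (st_rel h1 ha hb) (st_rel h2 hc hd)

lemma cc_three {S : Finset (Set V)} {e : Set V} (he : e ∈ S) (h3 : 3 ≤ e.ncard) :
    cc S + 2 ≤ Fintype.card V := by
  obtain ⟨a, ha, b, hb, hab⟩ := exists_pair_ncard (e := e) (by omega)
  obtain ⟨c, hc, hca, hcb⟩ : ∃ c ∈ e, c ≠ a ∧ c ≠ b := by
    by_contra hcon
    push_neg at hcon
    have hsub : e ⊆ {a, b} := by
      intro x hx
      rcases eq_or_ne x a with rfl | hxa
      · exact Set.mem_insert _ _
      · rcases eq_or_ne x b with rfl | hxb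
        · exact Set.mem_insert_of_mem _ rfl
        · exact absurd hxb (not_not_intro (hcon x hx hxa))
    have hle : e.ncard ≤ ({a, b} : Set V).ncard := Set.ncard_le_ncard hsub (Set.toFinite ({a, b} : Set V))
    have h2 : ({a, b} : Set V).ncard ≤ 2 :=
      le_trans (Set.ncard_insert_le _ _) (by simp)
    omega
  exact two_le_card_of_quot_le_two (y := b) (w := c) (x := a) (z := a)
    (Ne.symm hcb) hab (Ne.symm hca) hab (Ne.symm hca)
    (st_rel he ha hb) (st_rel he ha hc)

variable [Nonempty V]

lemma Q_coeff_card : (Q E).coeff (Fintype.card V) = 1 := by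
  rw [Q_coeff, Finset.sum_eq_single (∅ : Finset (Set V))]
  · rw [if_pos cc_empty.symm]
    simp
  · intro S hS hne
    rw [if_neg]
    obtain ⟨e, he⟩ := Finset.nonempty_iff_ne_empty.mpr hne
    have h1 := cc_le_pred E hS he
    have h2 : 0 < Fintype.card V := Fintype.card_pos
    omega
  · intro h
    exact absurd (Finset.empty_mem_powerset _) h

lemma Q_coeff_gt {i : ℕ} (h : Fintype.card V < i) : (Q E).coeff i = 0 := by
  rw [Q_coeff]
  refine Finset.sum_eq_zero fun S _ => ?_
  rw [if_neg]
  have := cc_le S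
  omega

lemma Q_natDegree : (Q E).natDegree = Fintype.card V :=
  le_antisymm (natDegree_le_iff_coeff_eq_zero.mpr fun _ hi => Q_coeff_gt E hi)
    (le_natDegree_of_ne_zero (by rw [Q_coeff_card]; exact one_ne_zero))

lemma Q_monic : (Q E).Monic := by
  rw [Monic, leadingCoeff, Q_natDegree, Q_coeff_card]

lemma filter_classify :
    (E' E).powerset.filter (fun S => Fintype.card V - 1 = cc S)
      = ((E' E).filter (fun e => e.ncard = 2)).image (fun e => ({e} : Finset (Set V))) := by
  classical
  have hn : 0 < Fintype.card V := Fintype.card_pos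
  ext S
  simp only [Finset.mem_filter, Finset.mem_powerset, Finset.mem_image]
  constructor
  · rintro ⟨hS, hcc⟩
    rcases Finset.eq_empty_or_nonempty S with rfl | ⟨e, he⟩
    · rw [cc_empty] at hcc
      omega
    by_cases hsing : ∃ e2 ∈ S, e2 ≠ e
    · obtain ⟨e2, he2, hne⟩ := hsing
      have := cc_pair E (Finset.mem_powerset.mpr hS) he2 he hne
      omega
    · push_neg at hsing
      have hSe : S = {e} := by
        apply Finset.eq_singleton_iff_unique_mem.mpr
        exact ⟨he, fun x hx => hsing x hx⟩
      have he' : e ∈ E' E := hS (hSe ▸ Finset.mem_singleton_self e)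
      have h2 : 2 ≤ e.ncard := ((mem_E' E).mp he').2
      rcases eq_or_lt_of_le h2 with heq | hlt
      · exact ⟨e, ⟨he', heq.symm⟩, hSe.symm⟩
      · have := cc_three (hSe ▸ Finset.mem_singleton_self e) hlt
        omega
  · rintro ⟨e, hef, rfl⟩
    obtain ⟨he', h2⟩ := hef
    refine ⟨Finset.singleton_subset_iff.mpr he', (cc_singleton_two h2).symm⟩

lemma Q_coeff_int (i : ℕ) : ∃ m : ℤ, (Q E).coeff i = (m : ℚ) := by
  classical
  refine ⟨∑ S ∈ (E' E).powerset, if i = cc S then (-1 : ℤ) ^ S.card else 0, ?_⟩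
  rw [Q_coeff]
  push_cast [apply_ite (fun z : ℤ => (z : ℚ))]
  rfl

lemma filter_card_eq :
    (((E' E).filter (fun e => e.ncard = 2)).card : ℚ)
      = ({e ∈ E | e.ncard = 2}.ncard : ℚ) := by
  classical
  congr 1
  rw [Set.ncard_eq_toFinset_card _ (Set.toFinite {e ∈ E | e.ncard = 2})]
  congr 1
  ext e
  simp only [Finset.mem_filter, Set.Finite.mem_toFinset, Set.mem_setOf_eq, mem_E']
  constructor
  · rintro ⟨⟨h1, _⟩, h3⟩
    exact ⟨h1, h3⟩
  · rintro ⟨h1, h2⟩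
    exact ⟨⟨h1, by omega⟩, h2⟩

lemma Q_coeff_pred :
    (Q E).coeff (Fintype.card V - 1)
      = -((((E' E).filter (fun e => e.ncard = 2)).card : ℚ)) := by
  classical
  rw [Q_coeff, ← Finset.sum_filter, filter_classify,
    Finset.sum_image (fun a _ b _ h => Finset.singleton_injective h)]
  simp

end IE

end Stmt11Aux

theorem stmt11 {V : Type*} [Fintype V] [Nonempty V] (E : Set (Set V))
    (hE0 : ∅ ∈ E) (hE1 : ∀ x : V, {x} ∈ E)
    (P : Polynomial ℚ)
    (hP : ∀ N : ℕ, 1 ≤ N →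
      P.eval (N : ℚ) =
        Nat.card {f : V → Fin N //
          ∀ e ∈ E, 2 ≤ e.ncard → ∃ x ∈ e, ∃ y ∈ e, f x ≠ f y}) :
    (∀ i : ℕ, ∃ m : ℤ, P.coeff i = (m : ℚ)) ∧
      P.Monic ∧ P.natDegree = Fintype.card V ∧
      P.coeff (Fintype.card V - 1) = -({e ∈ E | e.ncard = 2}.ncard : ℚ) := by
  classical
  have hsub : (fun n : ℕ => (n : ℚ)) '' (Set.Ici 1)
      ⊆ {x : ℚ | P.eval x = (Stmt11Aux.Q E).eval x} := by
    rintro x ⟨N, hN, rfl⟩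
    simp only [Set.mem_setOf_eq]
    rw [hP N hN, Stmt11Aux.Q_eval, ← Stmt11Aux.card_proper E N]
  have hinf : ((fun n : ℕ => (n : ℚ)) '' (Set.Ici 1)).Infinite :=
    (Set.Ici_infinite 1).image (Set.injOn_of_injective Nat.cast_injective)
  have hPQ : P = Stmt11Aux.Q E :=
    Polynomial.eq_of_infinite_eval_eq _ _ (hinf.mono hsub)
  rw [hPQ]
  exact ⟨Stmt11Aux.Q_coeff_int E, Stmt11Aux.Q_monic E, Stmt11Aux.Q_natDegree E,
    by rw [Stmt11Aux.Q_coeff_pred E, Stmt11Aux.filter_card_eq E]⟩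
end

section
/- Let G be a hypergraph on a nonempty finite set V, and let P be a polynomial with rational coefficients such that for every integer N ≥ 1, P(N) equals the number of ⊂-proper N-colourings of G. Then P(−1) = ∑_{k=1}^{|V|} (−1)^k · #{ ordered tuples (I_1,…,I_k) of nonempty pairwise disjoint subsets of V with I_1 ∪ … ∪ I_k = V such that no nontrivial edge of G is contained in any block I_p }. -/
open Finset

set_option linter.unusedSectionVars false

section Aux
variable {V : Type*} [Fintype V]

def Col (E : Set (Set V)) (N : ℕ) : Type _ :=
  {f : V → Fin N // ∀ e ∈ E, 2 ≤ e.ncard → ∃ x ∈ e, ∃ y ∈ e, f x ≠ f y}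

def Par (E : Set (Set V)) (k : ℕ) : Type _ :=
  {I : Fin k → Set V //
    (∀ p, (I p).Nonempty) ∧ (∀ p q, p ≠ q → Disjoint (I p) (I q)) ∧
      (⋃ p, I p) = Set.univ ∧
      ∀ e ∈ E, 2 ≤ e.ncard → ∀ p, ¬ e ⊆ I p}

noncomputable def idxOf {k : ℕ} (I : Fin k → Set V) (h : (⋃ p, I p) = Set.univ) (x : V) :
    Fin k :=
  (Set.mem_iUnion.mp (h ▸ Set.mem_univ x)).choose

lemma idxOf_mem {k : ℕ} (I : Fin k → Set V) (h : (⋃ p, I p) = Set.univ) (x : V) :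
    x ∈ I (idxOf I h x) :=
  (Set.mem_iUnion.mp (h ▸ Set.mem_univ x)).choose_spec

lemma idxOf_eq {k : ℕ} (I : Fin k → Set V) (h : (⋃ p, I p) = Set.univ)
    (hd : ∀ p q, p ≠ q → Disjoint (I p) (I q)) {x : V} {p : Fin k} (hx : x ∈ I p) :
    idxOf I h x = p := by
  by_contra hne
  exact Set.disjoint_left.mp (hd _ _ hne) (idxOf_mem I h x) hx

lemma orderIso_congr {α : Type*} [LinearOrder α] {s t : Finset α} (h : s = t)
    (q : Fin s.card) (p : Fin t.card) (hqp : (q : ℕ) = (p : ℕ)) :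
    (↑(s.orderIsoOfFin rfl q) : α) = ↑(t.orderIsoOfFin rfl p) := by
  subst h
  have : q = p := Fin.ext hqp
  rw [this]

variable {E : Set (Set V)} {N : ℕ}

lemma sigma_ext {a b : Σ s : Finset (Fin N), Par E s.card} (h1 : a.1 = b.1)
    (h2 : ∀ p : Fin b.1.card, a.2.1 (Fin.cast (by rw [h1]) p) = b.2.1 p) : a = b := by
  obtain ⟨s, I, hI⟩ := a
  obtain ⟨t, J, hJ⟩ := b
  simp only at h1 h2
  subst h1
  have h2' : ∀ p, I p = J p := by
    intro p
    have hc : Fin.cast (by rw []) p = p := Fin.ext rfl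
    have := h2 p
    rwa [show (Fin.cast _ p : Fin s.card) = p from Fin.ext rfl] at this
  congr 1
  exact Subtype.ext (funext h2')

noncomputable def phi (fc : Col E N) : Σ s : Finset (Fin N), Par E s.card :=
  ⟨Finset.image fc.1 Finset.univ,
    fun p => fc.1 ⁻¹' {((Finset.image fc.1 Finset.univ).orderIsoOfFin rfl p : Fin N)},
    by
      intro p
      obtain ⟨x, -, hx⟩ := Finset.mem_image.mp
        ((Finset.image fc.1 Finset.univ).orderIsoOfFin rfl p).2
      exact ⟨x, hx⟩,
    by
      intro p q hpq
      rw [Set.disjoint_left]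
      intro x hx hx'
      exact hpq <| (Finset.image fc.1 Finset.univ).orderIsoOfFin rfl |>.injective <|
        Subtype.coe_injective (hx.symm.trans hx')
    , by
      apply Set.eq_univ_of_forall
      intro x
      have hx : fc.1 x ∈ Finset.image fc.1 Finset.univ :=
        Finset.mem_image_of_mem _ (Finset.mem_univ x)
      refine Set.mem_iUnion.mpr ⟨((Finset.image fc.1 Finset.univ).orderIsoOfFin rfl).symm
        ⟨fc.1 x, hx⟩, ?_⟩
      show fc.1 x ∈ ({_} : Set (Fin N))
      simp
    , by
      intro e he hcard p hsub
      obtain ⟨x, hxe, y, hye, hxy⟩ := fc.2 e he hcard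
      exact hxy ((hsub hxe).trans (hsub hye).symm)⟩

noncomputable def psiFun (sI : Σ s : Finset (Fin N), Par E s.card) : V → Fin N :=
  fun x => ↑(sI.1.orderIsoOfFin rfl (idxOf sI.2.1 sI.2.2.2.2.1 x))

lemma psiFun_eq (sI : Σ s : Finset (Fin N), Par E s.card) {x : V} {p : Fin sI.1.card}
    (hx : x ∈ sI.2.1 p) : psiFun sI x = ↑(sI.1.orderIsoOfFin rfl p) := by
  unfold psiFun
  rw [idxOf_eq sI.2.1 sI.2.2.2.2.1 sI.2.2.2.1 hx]

lemma psiFun_idx (sI : Σ s : Finset (Fin N), Par E s.card) {x y : V}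
    (h : psiFun sI x = psiFun sI y) :
    idxOf sI.2.1 sI.2.2.2.2.1 x = idxOf sI.2.1 sI.2.2.2.2.1 y := by
  have h' : (↑(sI.1.orderIsoOfFin rfl (idxOf sI.2.1 sI.2.2.2.2.1 x)) : Fin N) =
      ↑(sI.1.orderIsoOfFin rfl (idxOf sI.2.1 sI.2.2.2.2.1 y)) := h
  exact (sI.1.orderIsoOfFin rfl).injective (Subtype.coe_injective h')

lemma psiFun_proper (sI : Σ s : Finset (Fin N), Par E s.card) :
    ∀ e ∈ E, 2 ≤ e.ncard → ∃ x ∈ e, ∃ y ∈ e, psiFun sI x ≠ psiFun sI y := by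
  intro e he hcard
  by_contra hcon
  push_neg at hcon
  have hene : e.Nonempty := by
    rcases Set.eq_empty_or_nonempty e with h | h
    · simp [h] at hcard
    · exact h
  obtain ⟨x0, hx0⟩ := hene
  refine sI.2.2.2.2.2 e he hcard (idxOf sI.2.1 sI.2.2.2.2.1 x0) ?_
  intro y hy
  have h2 := psiFun_idx sI (hcon y hy x0 hx0)
  have := idxOf_mem sI.2.1 sI.2.2.2.2.1 y
  rwa [h2] at this

noncomputable def psi (sI : Σ s : Finset (Fin N), Par E s.card) : Col E N :=
  ⟨psiFun sI, psiFun_proper sI⟩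

lemma left_inv : Function.LeftInverse (psi (E := E) (N := N)) phi := by
  rintro ⟨f, hf⟩
  apply Subtype.ext
  funext x
  show psiFun (phi ⟨f, hf⟩) x = f x
  have hmem := idxOf_mem (phi ⟨f, hf⟩).2.1 (phi ⟨f, hf⟩).2.2.2.2.1 x
  exact hmem.symm

lemma right_inv : Function.RightInverse (psi (E := E) (N := N)) phi := by
  rintro ⟨s, I, h1, h2, h3, h4⟩
  set sI : Σ s : Finset (Fin N), Par E s.card := ⟨s, I, h1, h2, h3, h4⟩ with hsI
  have hkey : ∀ (x : V) (p : Fin s.card), x ∈ I p → psiFun sI x = ↑(s.orderIsoOfFin rfl p) :=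
    fun x p hx => psiFun_eq sI hx
  have hs : Finset.image (psiFun sI) Finset.univ = s := by
    apply Finset.Subset.antisymm
    · intro c hc
      obtain ⟨x, -, hx⟩ := Finset.mem_image.mp hc
      rw [← hx]
      exact (s.orderIsoOfFin rfl (idxOf I h3 x)).2
    · intro c hc
      obtain ⟨x, hx⟩ := h1 ((s.orderIsoOfFin rfl).symm ⟨c, hc⟩)
      have hx' := hkey x _ hx
      simp only [OrderIso.apply_symm_apply] at hx'
      exact Finset.mem_image.mpr ⟨x, Finset.mem_univ x, hx'⟩
  refine sigma_ext hs ?_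
  intro p
  show psiFun sI ⁻¹' {↑((Finset.image (psiFun sI) Finset.univ).orderIsoOfFin rfl
    (Fin.cast (by rw [hs]) p))} = I p
  have hc : (↑((Finset.image (psiFun sI) Finset.univ).orderIsoOfFin rfl
      (Fin.cast (by rw [hs]) p)) : Fin N) = ↑(s.orderIsoOfFin rfl p) :=
    orderIso_congr hs _ p rfl
  rw [hc]
  ext x
  simp only [Set.mem_preimage, Set.mem_singleton_iff]
  constructor
  · intro hx
    have h2' : idxOf I h3 x = p := by
      apply (s.orderIsoOfFin rfl).injective
      apply Subtype.coe_injective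
      exact ((hkey x _ (idxOf_mem I h3 x)).symm.trans hx)
    have := idxOf_mem I h3 x
    rwa [h2'] at this
  · intro hx
    exact hkey x p hx

lemma key (E : Set (Set V)) (N : ℕ) :
    Nat.card (Col E N) = ∑ s : Finset (Fin N), Nat.card (Par E s.card) := by
  classical
  have e : Col E N ≃ Σ s : Finset (Fin N), Par E s.card :=
    ⟨phi, psi, left_inv, right_inv⟩
  rw [Nat.card_congr e]
  have hfin : ∀ k, Finite (Par E k) := fun k => by unfold Par; infer_instance
  letI : ∀ s : Finset (Fin N), Fintype (Par E s.card) := fun s => Fintype.ofFinite _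
  rw [Nat.card_eq_fintype_card, Fintype.card_sigma]
  exact Finset.sum_congr rfl fun s _ => (Nat.card_eq_fintype_card).symm

end Aux

section Count
variable {V : Type*} [Fintype V]

lemma key2 (E : Set (Set V)) (N : ℕ) :
    Nat.card (Col E N) = ∑ j ∈ Finset.range (N + 1), N.choose j * Nat.card (Par E j) := by
  rw [key E N]
  have h1 : (Finset.univ : Finset (Finset (Fin N))) = (Finset.univ : Finset (Fin N)).powerset :=
    (Finset.powerset_univ).symm
  rw [show ∑ s : Finset (Fin N), Nat.card (Par E s.card)
      = ∑ s ∈ (Finset.univ : Finset (Fin N)).powerset, Nat.card (Par E s.card) by rw [← h1]]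
  rw [Finset.sum_powerset]
  rw [Finset.card_univ, Fintype.card_fin]
  refine Finset.sum_congr rfl fun j hj => ?_
  have : ∀ t ∈ Finset.powersetCard j (Finset.univ : Finset (Fin N)),
      Nat.card (Par E t.card) = Nat.card (Par E j) := by
    intro t ht
    rw [(Finset.mem_powersetCard.mp ht).2]
  rw [Finset.sum_congr rfl this, Finset.sum_const, Finset.card_powersetCard,
    Finset.card_univ, Fintype.card_fin, smul_eq_mul]

lemma par_zero [Nonempty V] (E : Set (Set V)) : Nat.card (Par E 0) = 0 := by
  have : IsEmpty (Par E 0) := by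
    constructor
    rintro ⟨I, h1, h2, h3, h4⟩
    have : (⋃ p : Fin 0, I p) = ∅ := Set.iUnion_of_empty _
    rw [h3] at this
    exact Set.empty_ne_univ this.symm
  exact Nat.card_of_isEmpty

lemma par_big (E : Set (Set V)) {k : ℕ} (hk : Fintype.card V < k) : Nat.card (Par E k) = 0 := by
  have : IsEmpty (Par E k) := by
    constructor
    rintro ⟨I, h1, h2, h3, h4⟩
    have hchoice : ∀ p, (h1 p).choose ∈ I p := fun p => (h1 p).choose_spec
    have hinj : Function.Injective fun p => (h1 p).choose := by
      intro p q hpq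
      by_contra hne
      simp only at hpq
      exact Set.disjoint_left.mp (h2 p q hne) (hchoice p) (hpq ▸ hchoice q)
    have := Fintype.card_le_of_injective _ hinj
    rw [Fintype.card_fin] at this
    omega
  exact Nat.card_of_isEmpty

lemma key3 [Nonempty V] (E : Set (Set V)) (N : ℕ) :
    Nat.card (Col E N) =
      ∑ k ∈ Finset.Icc 1 (Fintype.card V), N.choose k * Nat.card (Par E k) := by
  rw [key2 E N]
  set n := Fintype.card V
  have hzero : ∀ k, k ∉ Finset.Icc 1 n → N.choose k * Nat.card (Par E k) = 0 := by
    intro k hk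
    rw [Finset.mem_Icc] at hk
    push_neg at hk
    rcases Nat.lt_or_ge k 1 with h | h
    · interval_cases k
      rw [par_zero]; ring
    · rw [par_big E (hk h)]; ring
  have hzero' : ∀ k, k ∉ Finset.range (N + 1) → N.choose k * Nat.card (Par E k) = 0 := by
    intro k hk
    rw [Finset.mem_range] at hk
    rw [Nat.choose_eq_zero_of_lt (by omega)]; ring
  rw [Finset.sum_subset (Finset.subset_union_left (s₂ := Finset.Icc 1 n))
      (fun x _ hx => hzero' x hx),
    Finset.sum_subset (Finset.subset_union_right (s₁ := Finset.range (N+1)))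
      (fun x _ hx => hzero x hx)]

end Count

lemma descPoch_neg_one (k : ℕ) : (descPochhammer ℚ k).eval (-1) = (-1) ^ k * k.factorial := by
  induction k with
  | zero => simp
  | succ n ih =>
    rw [descPochhammer_succ_eval, ih, Nat.factorial_succ, pow_succ]
    push_cast; ring

theorem stmt13 {V : Type*} [Fintype V] [Nonempty V] (E : Set (Set V))
    (hE0 : ∅ ∈ E) (hE1 : ∀ x : V, {x} ∈ E)
    (P : Polynomial ℚ)
    (hP : ∀ N : ℕ, 1 ≤ N →
      P.eval (N : ℚ) =
        Nat.card {f : V → Fin N //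
          ∀ e ∈ E, 2 ≤ e.ncard → ∃ x ∈ e, ∃ y ∈ e, f x ≠ f y}) :
    P.eval (-1 : ℚ) =
      ∑ k ∈ Finset.Icc 1 (Fintype.card V),
        (-1 : ℚ) ^ k *
          Nat.card {I : Fin k → Set V //
            (∀ p, (I p).Nonempty) ∧ (∀ p q, p ≠ q → Disjoint (I p) (I q)) ∧
              (⋃ p, I p) = Set.univ ∧
              ∀ e ∈ E, 2 ≤ e.ncard → ∀ p, ¬ e ⊆ I p} := by
  classical
  set n := Fintype.card V with hn
  set g : ℕ → ℕ := fun k => Nat.card (Par E k) with hg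
  set Q : Polynomial ℚ :=
    ∑ k ∈ Finset.Icc 1 n, Polynomial.C ((g k : ℚ) / k.factorial) * descPochhammer ℚ k with hQ
  have hQeval : ∀ x : ℚ, Q.eval x =
      ∑ k ∈ Finset.Icc 1 n, (g k : ℚ) / k.factorial * (descPochhammer ℚ k).eval x := by
    intro x
    rw [hQ, Polynomial.eval_finset_sum]
    exact Finset.sum_congr rfl fun k _ => by rw [Polynomial.eval_mul, Polynomial.eval_C]
  have hPQ : P = Q := by
    have hroot : ∀ N : ℕ, 1 ≤ N → (P - Q).eval ((N : ℚ)) = 0 := by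
      intro N hN
      rw [Polynomial.eval_sub, hP N hN, hQeval]
      have hcol : Nat.card {f : V → Fin N //
          ∀ e ∈ E, 2 ≤ e.ncard → ∃ x ∈ e, ∃ y ∈ e, f x ≠ f y} = Nat.card (Col E N) := rfl
      rw [hcol, key3 E N]
      push_cast
      rw [Finset.sum_congr rfl (fun k _ => ?_), sub_self]
      rw [descPochhammer_eval_eq_descFactorial ℚ N k,
        Nat.descFactorial_eq_factorial_mul_choose]
      push_cast
      have : (k.factorial : ℚ) ≠ 0 := Nat.cast_ne_zero.mpr k.factorial_ne_zero
      field_simp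
      ring
    have hinf : {x : ℚ | (P - Q).IsRoot x}.Infinite := by
      apply Set.infinite_of_injective_forall_mem (f := fun m : ℕ => ((m + 1 : ℕ) : ℚ))
      · intro a b hab
        have : (a + 1 : ℕ) = (b + 1 : ℕ) := Nat.cast_injective hab
        omega
      · intro m
        exact hroot (m + 1) (by omega)
    have h0 := Polynomial.eq_zero_of_infinite_isRoot _ hinf
    exact sub_eq_zero.mp h0
  rw [hPQ, hQeval]
  refine Finset.sum_congr rfl fun k _ => ?_
  rw [descPoch_neg_one]
  have : (k.factorial : ℚ) ≠ 0 := Nat.cast_ne_zero.mpr k.factorial_ne_zero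
  have hgk : (Nat.card {I : Fin k → Set V //
      (∀ p, (I p).Nonempty) ∧ (∀ p q, p ≠ q → Disjoint (I p) (I q)) ∧
        (⋃ p, I p) = Set.univ ∧
        ∀ e ∈ E, 2 ≤ e.ncard → ∀ p, ¬ e ⊆ I p} : ℚ) = (g k : ℚ) := rfl
  rw [hgk]
  field_simp
end

section
/- Let G be a hypergraph on a nonempty finite set V, and let P be a polynomial with rational coefficients such that for every integer N ≥ 1, P(N) equals the number of ∩-proper N-colourings of G. Then P(−1) = (−1)^{|V|} times the number of total acyclic orientations of G. -/
/-- An acyclic orientation of the hypergraph with edge set `E`: a reflexive transitive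
relation `le` on the vertices such that (i) on every nontrivial edge it restricts to a
nontrivial total quasi-order, (ii) whenever `x < y` there is a strictly increasing path
from `x` to `y`, and (iii) equivalent vertices share an edge. -/
def IsAcyclicOrientation {V : Type*} (E : Set (Set V)) (le : V → V → Prop) : Prop :=
  Reflexive le ∧ Transitive le ∧
    (∀ e ∈ E, 2 ≤ e.ncard →
      (∀ x ∈ e, ∀ y ∈ e, le x y ∨ le y x) ∧ ¬ (∀ x ∈ e, ∀ y ∈ e, le x y ∧ le y x)) ∧
    (∀ x y : V, le x y → ¬ le y x →
      Relation.TransGen (fun a b => (∃ e ∈ E, a ∈ e ∧ b ∈ e) ∧ le a b ∧ ¬ le b a) x y) ∧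
    (∀ x y : V, le x y → le y x → ∃ e ∈ E, x ∈ e ∧ y ∈ e)

/-- `cl(≤)`: the number of equivalence classes of the relation `x ∼ y ↔ x ≤ y ∧ y ≤ x`. -/
noncomputable def clCount {V : Type*} (le : V → V → Prop) : ℕ :=
  Set.ncard {C : Set V | ∃ x, C = {y | le x y ∧ le y x}}

open Finset

attribute [local instance] Classical.propDecidable

universe u

private noncomputable def SCount (α : Type u) (r : α → α → Prop) (k : ℕ) : ℕ :=
  Nat.card {f : α → Fin k // Function.Surjective f ∧ ∀ x y, r x y → x ≠ y → f x < f y}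

private lemma SCount_eq_zero {α : Type u} [Finite α] (r : α → α → Prop) {k : ℕ}
    (h : Nat.card α < k) : SCount α r k = 0 := by
  have : IsEmpty {f : α → Fin k // Function.Surjective f ∧ ∀ x y, r x y → x ≠ y → f x < f y} := by
    constructor
    rintro ⟨f, hs, -⟩
    have := Nat.card_le_card_of_surjective f hs
    simp [Nat.card_eq_fintype_card] at this
    omega
  exact Nat.card_of_isEmpty

private lemma SCount_zero_of_isEmpty {α : Type u} [IsEmpty α] (r : α → α → Prop) :
    SCount α r 0 = 1 := by
  have : Unique {f : α → Fin 0 // Function.Surjective f ∧ ∀ x y, r x y → x ≠ y → f x < f y} :=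
    { default := ⟨fun a => isEmptyElim a, fun b => b.elim0, fun x _ _ _ => isEmptyElim x⟩
      uniq := fun f => Subtype.ext (funext fun a => isEmptyElim a) }
  exact Nat.card_unique

private lemma SCount_zero_of_nonempty {α : Type u} [Nonempty α] (r : α → α → Prop) :
    SCount α r 0 = 0 := by
  have : IsEmpty {f : α → Fin 0 // Function.Surjective f ∧ ∀ x y, r x y → x ≠ y → f x < f y} := by
    constructor
    rintro ⟨f, -, -⟩
    exact (f (Classical.arbitrary α)).elim0
  exact Nat.card_of_isEmpty

private lemma nat_card_sigma {ι : Type*} [Fintype ι] (f : ι → Type*) [∀ i, Finite (f i)] :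
    Nat.card (Sigma f) = ∑ i, Nat.card (f i) := by
  letI : ∀ i, Fintype (f i) := fun i => Fintype.ofFinite _
  simp [Nat.card_eq_fintype_card, Fintype.card_sigma]

private lemma SCount_succ {α : Type u} [Fintype α] [DecidableEq α] (r : α → α → Prop)
    [DecidablePred (fun x : α => ∀ y, r x y → y = x)] (k : ℕ) :
    SCount α r (k + 1) =
      ∑ A ∈ (univ.filter (fun x : α => ∀ y, r x y → y = x)).powerset.erase ∅,
        SCount {x : α // x ∉ A} (fun a b => r a.1 b.1) k := by
  classical
  set M : Finset α := univ.filter (fun x : α => ∀ y, r x y → y = x) with hM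
  set s : Finset (Finset α) := M.powerset.erase ∅ with hs
  let T := {f : α → Fin (k+1) // Function.Surjective f ∧ ∀ x y, r x y → x ≠ y → f x < f y}
  have hmem : ∀ p : T, (univ.filter (fun x => p.1 x = Fin.last k)) ∈ s := by
    rintro ⟨f, hsurj, hstrict⟩
    simp only [hs, Finset.mem_erase, Finset.mem_powerset]
    constructor
    · obtain ⟨x, hx⟩ := hsurj (Fin.last k)
      intro h0
      have hxm : x ∈ univ.filter (fun x => f x = Fin.last k) := by simp [hx]
      rw [h0] at hxm
      exact absurd hxm (Finset.notMem_empty x)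
    · intro x hx
      simp only [Finset.mem_filter, Finset.mem_univ, true_and] at hx
      simp only [hM, Finset.mem_filter, Finset.mem_univ, true_and]
      intro y hxy
      by_contra hne
      have hlt := hstrict x y hxy (fun h => hne h.symm)
      rw [hx] at hlt
      exact absurd hlt (not_lt.2 (Fin.le_last _))
  let F : T → {A : Finset α // A ∈ s} := fun p => ⟨_, hmem p⟩
  have hfib : ∀ i : {A : Finset α // A ∈ s},
      Nat.card {p : T // F p = i} = SCount {x : α // x ∉ i.1} (fun a b => r a.1 b.1) k := by
    rintro ⟨A, hA⟩
    obtain ⟨hAne, hAM⟩ := Finset.mem_erase.1 hA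
    have hAsub : A ⊆ M := Finset.mem_powerset.1 hAM
    apply Nat.card_congr
    refine
      { toFun := fun q => ⟨fun x => (q.1.1 x.1).castPred ?_, ?_, ?_⟩
        invFun := fun g =>
          ⟨⟨fun x => if h : x ∈ A then Fin.last k else (g.1 ⟨x, h⟩).castSucc, ?_, ?_⟩, ?_⟩
        left_inv := ?_
        right_inv := ?_ }
    · -- f x.1 ≠ last
      have hAf : univ.filter (fun z => q.1.1 z = Fin.last k) = A := congrArg Subtype.val q.2
      intro hlast
      have hxm : x.1 ∈ univ.filter (fun z => q.1.1 z = Fin.last k) := by simp [hlast]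
      rw [hAf] at hxm
      exact x.2 hxm
    · -- surjectivity of g
      intro b
      obtain ⟨v, hv⟩ := q.1.2.1 b.castSucc
      have hAf : univ.filter (fun z => q.1.1 z = Fin.last k) = A := congrArg Subtype.val q.2
      have hvA : v ∉ A := by
        rw [← hAf]
        simp only [Finset.mem_filter, Finset.mem_univ, true_and, hv]
        exact (Fin.castSucc_lt_last b).ne
      refine ⟨⟨v, hvA⟩, ?_⟩
      apply Fin.castSucc_injective
      rw [Fin.castSucc_castPred]
      exact hv
    · -- strictness of g
      intro x y hr hne
      have hlt := q.1.2.2 x.1 y.1 hr (fun h => hne (Subtype.ext h))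
      rw [← Fin.castSucc_lt_castSucc_iff, Fin.castSucc_castPred, Fin.castSucc_castPred]
      exact hlt
    · -- surjectivity of f
      intro b
      by_cases hb : b = Fin.last k
      · obtain ⟨x, hx⟩ := Finset.nonempty_iff_ne_empty.2 hAne
        exact ⟨x, by simp [hx, hb]⟩
      · obtain ⟨⟨v, hv⟩, hgv⟩ := g.2.1 (b.castPred hb)
        refine ⟨v, ?_⟩
        simp only [dif_neg hv, hgv, Fin.castSucc_castPred]
    · -- strictness of f
      intro x y hr hne
      by_cases hx : x ∈ A
      · have hxM := hAsub hx
        simp only [hM, Finset.mem_filter, Finset.mem_univ, true_and] at hxM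
        exact absurd (hxM y hr).symm hne
      · by_cases hy : y ∈ A
        · simp only [dif_neg hx, dif_pos hy]
          exact Fin.castSucc_lt_last _
        · simp only [dif_neg hx, dif_neg hy]
          rw [Fin.castSucc_lt_castSucc_iff]
          exact g.2.2 ⟨x, hx⟩ ⟨y, hy⟩ hr (fun h => hne (congrArg Subtype.val h))
    · -- F f = ⟨A, hA⟩
      apply Subtype.ext
      show univ.filter _ = A
      ext z
      simp only [Finset.mem_filter, Finset.mem_univ, true_and]
      constructor
      · intro hz
        by_contra hzA
        rw [dif_neg hzA] at hz
        exact absurd hz (Fin.castSucc_lt_last _).ne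
      · intro hz
        rw [dif_pos hz]
    · -- left inverse
      rintro ⟨⟨f, hf⟩, hq⟩
      have hAf : univ.filter (fun z => f z = Fin.last k) = A := congrArg Subtype.val hq
      apply Subtype.ext
      apply Subtype.ext
      funext x
      by_cases hx : x ∈ A
      · have : f x = Fin.last k := by
          rw [← hAf] at hx
          simpa using hx
        simp [dif_pos hx, this]
      · simp only [dif_neg hx, Fin.castSucc_castPred]
    · -- right inverse
      rintro ⟨g, hg⟩
      apply Subtype.ext
      funext x
      apply Fin.castSucc_injective
      rw [Fin.castSucc_castPred]
      exact dif_neg x.2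
  calc SCount α r (k+1) = Nat.card T := rfl
    _ = Nat.card (Σ i : {A : Finset α // A ∈ s}, {p : T // F p = i}) :=
        Nat.card_congr (Equiv.sigmaFiberEquiv F).symm
    _ = ∑ i : {A : Finset α // A ∈ s}, Nat.card {p : T // F p = i} := nat_card_sigma _
    _ = ∑ i : {A : Finset α // A ∈ s}, SCount {x : α // x ∉ i.1} (fun a b => r a.1 b.1) k :=
        Finset.sum_congr rfl (fun i _ => hfib i)
    _ = ∑ A ∈ s, SCount {x : α // x ∉ A} (fun a b => r a.1 b.1) k :=
        Finset.sum_coe_sort s (fun A => SCount {x : α // x ∉ A} (fun a b => r a.1 b.1) k)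

private lemma exists_maximal_rel {α : Type u} [Finite α] [Nonempty α] (r : α → α → Prop)
    (hrefl : Reflexive r) (htrans : Transitive r) (hanti : ∀ x y, r x y → r y x → x = y) :
    ∃ x : α, ∀ y, r x y → y = x := by
  letI : Preorder α := { le := r, le_refl := hrefl, le_trans := fun a b c hab hbc => htrans hab hbc }
  letI : Fintype α := Fintype.ofFinite α
  obtain ⟨m, -, hm⟩ := Finset.exists_maximal (Finset.univ_nonempty (α := α))
  refine ⟨m, fun y hy => ?_⟩
  by_contra hne
  exact hne (hanti y m (hm (Finset.mem_univ y) hy) hy)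

private lemma sum_pow_card_erase {α : Type u} [DecidableEq α] {M : Finset α} (hM : M.Nonempty) :
    ∑ A ∈ M.powerset.erase ∅, (-1 : ℤ) ^ (A.card - 1) = 1 := by
  have h0 : ∑ A ∈ M.powerset, (-1 : ℤ) ^ A.card = 0 := by
    rw [Finset.sum_powerset_neg_one_pow_card, if_neg (Finset.nonempty_iff_ne_empty.1 hM)]
  have hins : M.powerset = insert ∅ (M.powerset.erase ∅) :=
    (Finset.insert_erase (Finset.empty_mem_powerset M)).symm
  rw [hins, Finset.sum_insert (Finset.notMem_erase _ _)] at h0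
  simp only [Finset.card_empty, pow_zero] at h0
  have hneg : ∑ A ∈ M.powerset.erase ∅, (-1 : ℤ) ^ A.card =
      -∑ A ∈ M.powerset.erase ∅, (-1 : ℤ) ^ (A.card - 1) := by
    rw [← Finset.sum_neg_distrib]
    refine Finset.sum_congr rfl fun A hA => ?_
    have h1 : 1 ≤ A.card := by
      have := Finset.mem_erase.1 hA
      have := Finset.nonempty_iff_ne_empty.2 this.1
      exact Finset.card_pos.2 this
    obtain ⟨m, hm⟩ : ∃ m, A.card = m + 1 := ⟨A.card - 1, by omega⟩
    rw [hm]
    simp only [Nat.add_sub_cancel, pow_succ]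
    ring
  rw [hneg] at h0
  linarith

private lemma sum_SCount_aux (n : ℕ) :
    ∀ (α : Type u) [Fintype α] (r : α → α → Prop), Reflexive r → Transitive r →
      (∀ x y, r x y → r y x → x = y) → Fintype.card α = n →
      ∑ k ∈ Finset.range (n + 1), (-1 : ℤ) ^ (n - k) * SCount α r k = 1 := by
  induction n using Nat.strong_induction_on with
  | _ n IH =>
    intro α _ r hrefl htrans hanti hcard
    rcases n with _ | n
    · haveI : IsEmpty α := Fintype.card_eq_zero_iff.1 hcard
      simp [SCount_zero_of_isEmpty r]
    · haveI : Nonempty α := Fintype.card_pos_iff.1 (by omega)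
      classical
      set M : Finset α := univ.filter (fun x : α => ∀ y, r x y → y = x) with hMdef
      have hMne : M.Nonempty := by
        obtain ⟨m, hm⟩ := exists_maximal_rel r hrefl htrans hanti
        exact ⟨m, Finset.mem_filter.2 ⟨Finset.mem_univ m, hm⟩⟩
      have hS0 : SCount α r 0 = 0 := SCount_zero_of_nonempty r
      have hstep : ∀ A ∈ M.powerset.erase ∅,
          (∑ k ∈ Finset.range (n + 1), (-1 : ℤ) ^ (n - k) *
            SCount {x : α // x ∉ A} (fun a b => r a.1 b.1) k) = (-1 : ℤ) ^ (A.card - 1) := by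
        intro A hA
        obtain ⟨hAne, hAM⟩ := Finset.mem_erase.1 hA
        have hA1 : 1 ≤ A.card := Finset.card_pos.2 (Finset.nonempty_iff_ne_empty.2 hAne)
        have hAle : A.card ≤ n + 1 := by
          have := Finset.card_le_univ A
          rwa [hcard] at this
        have hcβ : Fintype.card {x : α // x ∉ A} = n + 1 - A.card := by
          have h1 : Fintype.card {x : α // ¬ x ∈ A} =
              Fintype.card α - Fintype.card {x : α // x ∈ A} :=
            Fintype.card_subtype_compl _
          have h2 : Fintype.card {x : α // x ∈ A} = A.card := Fintype.card_coe A
          rw [h1, h2, hcard]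
        set c := n + 1 - A.card with hc
        have hcn : c ≤ n := by omega
        have hzero : ∀ k, c < k → SCount {x : α // x ∉ A} (fun a b => r a.1 b.1) k = 0 :=
          fun k hk => SCount_eq_zero _ (by rw [Nat.card_eq_fintype_card, hcβ]; exact hk)
        have hrestrict : (∑ k ∈ Finset.range (n + 1), (-1:ℤ)^(n-k) *
              SCount {x : α // x ∉ A} (fun a b => r a.1 b.1) k)
            = ∑ k ∈ Finset.range (c + 1), (-1:ℤ)^(n-k) *
              SCount {x : α // x ∉ A} (fun a b => r a.1 b.1) k := by
          refine (Finset.sum_subset (Finset.range_subset_range.2 (by omega)) ?_).symm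
          intro k hk hk2
          simp only [Finset.mem_range] at hk hk2
          rw [hzero k (by omega)]
          simp
        rw [hrestrict]
        have hIH := IH c (by omega) {x : α // x ∉ A} (fun a b => r a.1 b.1)
          (fun a => hrefl a.1) (fun a b d hab hbd => htrans hab hbd)
          (fun a b hab hba => Subtype.ext (hanti a.1 b.1 hab hba)) hcβ
        calc (∑ k ∈ Finset.range (c+1), (-1:ℤ)^(n-k) *
              SCount {x : α // x ∉ A} (fun a b => r a.1 b.1) k)
            = ∑ k ∈ Finset.range (c+1), (-1:ℤ)^(n-c) * ((-1:ℤ)^(c-k) *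
              SCount {x : α // x ∉ A} (fun a b => r a.1 b.1) k) := by
              refine Finset.sum_congr rfl fun k hk => ?_
              simp only [Finset.mem_range] at hk
              rw [← mul_assoc, ← pow_add]
              congr 2
              omega
          _ = (-1:ℤ)^(n-c) * ∑ k ∈ Finset.range (c+1), (-1:ℤ)^(c-k) *
              SCount {x : α // x ∉ A} (fun a b => r a.1 b.1) k := by rw [Finset.mul_sum]
          _ = (-1:ℤ)^(n-c) := by rw [hIH, mul_one]
          _ = (-1:ℤ)^(A.card - 1) := by congr 1; omega
      have hsucc : ∀ k : ℕ, SCount α r (k+1) = ∑ A ∈ M.powerset.erase ∅,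
          SCount {x : α // x ∉ A} (fun a b => r a.1 b.1) k := fun k => SCount_succ r k
      calc ∑ k ∈ Finset.range (n + 1 + 1), (-1:ℤ)^(n + 1 - k) * SCount α r k
          = (∑ k ∈ Finset.range (n+1), (-1:ℤ)^(n+1-(k+1)) * SCount α r (k+1))
            + (-1:ℤ)^(n+1-0) * SCount α r 0 := Finset.sum_range_succ' _ (n+1)
        _ = ∑ k ∈ Finset.range (n+1), ∑ A ∈ M.powerset.erase ∅,
              (-1:ℤ)^(n-k) * SCount {x : α // x ∉ A} (fun a b => r a.1 b.1) k := by
            rw [hS0]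
            simp only [Nat.cast_zero, mul_zero, add_zero, Nat.succ_sub_succ]
            refine Finset.sum_congr rfl fun k _ => ?_
            rw [hsucc k, Nat.cast_sum, Finset.mul_sum]
        _ = ∑ A ∈ M.powerset.erase ∅, ∑ k ∈ Finset.range (n+1),
              (-1:ℤ)^(n-k) * SCount {x : α // x ∉ A} (fun a b => r a.1 b.1) k :=
            Finset.sum_comm
        _ = ∑ A ∈ M.powerset.erase ∅, (-1:ℤ)^(A.card-1) := Finset.sum_congr rfl hstep
        _ = 1 := sum_pow_card_erase hMne

private lemma sum_SCount {α : Type u} [Fintype α] (r : α → α → Prop) (hrefl : Reflexive r)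
    (htrans : Transitive r) (hanti : ∀ x y, r x y → r y x → x = y) :
    ∑ k ∈ Finset.range (Fintype.card α + 1),
      (-1 : ℤ) ^ (Fintype.card α - k) * SCount α r k = 1 :=
  sum_SCount_aux (Fintype.card α) α r hrefl htrans hanti rfl

section Orient
variable {V : Type u} (E : Set (Set V))

private def lef {k : ℕ} (f : V → Fin k) : V → V → Prop :=
  Relation.ReflTransGen (fun a b => (∃ e ∈ E, a ∈ e ∧ b ∈ e) ∧ f a < f b)

private lemma lef_le {k : ℕ} {f : V → Fin k} {a b : V} (h : lef E f a b) : f a ≤ f b := by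
  induction h with
  | refl => exact le_refl _
  | tail _ h2 ih => exact le_trans ih (le_of_lt h2.2)

private lemma lef_strict {k : ℕ} {f : V → Fin k} {a b : V} (h : lef E f a b) (hne : a ≠ b) :
    f a < f b := by
  rcases Relation.ReflTransGen.cases_tail h with heq | ⟨c, hc, hs⟩
  · exact absurd heq.symm hne
  · exact lt_of_le_of_lt (lef_le E hc) hs.2

private lemma lef_antisymm {k : ℕ} {f : V → Fin k} {a b : V} (h1 : lef E f a b)
    (h2 : lef E f b a) : a = b := by
  by_contra hne
  exact absurd (lef_le E h2) (not_le.2 (lef_strict E h1 hne))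

private lemma lef_transGen {k : ℕ} {f : V → Fin k} {a b : V} (h : lef E f a b) (hne : a ≠ b) :
    Relation.TransGen (fun a b => (∃ e ∈ E, a ∈ e ∧ b ∈ e) ∧ f a < f b) a b := by
  induction h with
  | refl => exact absurd rfl hne
  | @tail c b h1 h2 ih =>
    by_cases hac : a = c
    · subst hac; exact Relation.TransGen.single h2
    · exact (ih hac).tail h2

private lemma two_le_ncard [Finite V] {e : Set V} {x y : V} (hx : x ∈ e) (hy : y ∈ e)
    (hxy : x ≠ y) : 2 ≤ e.ncard := by
  have h1 : ({x, y} : Set V).ncard = 2 := Set.ncard_pair hxy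
  have h2 : ({x, y} : Set V) ⊆ e := by rintro z (rfl | rfl) <;> assumption
  calc 2 = ({x, y} : Set V).ncard := h1.symm
    _ ≤ e.ncard := Set.ncard_le_ncard h2 e.toFinite

private lemma lef_isAO [Finite V] {k : ℕ} (hE1 : ∀ x : V, {x} ∈ E) {f : V → Fin k}
    (hf : ∀ e ∈ E, ∀ x ∈ e, ∀ y ∈ e, x ≠ y → f x ≠ f y) :
    IsAcyclicOrientation E (lef E f) ∧
      ∀ e ∈ E, ∀ x ∈ e, ∀ y ∈ e, lef E f x y → lef E f y x → x = y := by
  refine ⟨⟨fun a => Relation.ReflTransGen.refl, fun a b c h1 h2 => h1.trans h2, ?_, ?_, ?_⟩,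
    fun e he x hx y hy h1 h2 => lef_antisymm E h1 h2⟩
  · intro e he h2card
    constructor
    · intro x hx y hy
      by_cases hxy : x = y
      · subst hxy; exact Or.inl Relation.ReflTransGen.refl
      · rcases lt_or_gt_of_ne (hf e he x hx y hy hxy) with h | h
        · exact Or.inl (Relation.ReflTransGen.single ⟨⟨e, he, hx, hy⟩, h⟩)
        · exact Or.inr (Relation.ReflTransGen.single ⟨⟨e, he, hy, hx⟩, h⟩)
    · intro hall
      obtain ⟨x, y, hx, hy, hxy⟩ := (Set.one_lt_ncard_iff e.toFinite).1 h2card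
      obtain ⟨hl1, hl2⟩ := hall x hx y hy
      exact hxy (lef_antisymm E hl1 hl2)
  · intro x y h hny
    have hne : x ≠ y := by rintro rfl; exact hny h
    refine Relation.TransGen.mono ?_ x y (lef_transGen E h hne)
    rintro a b ⟨hedge, hlt⟩
    exact ⟨hedge, Relation.ReflTransGen.single ⟨hedge, hlt⟩,
      fun hba => absurd (lef_le E hba) (not_le.2 hlt)⟩
  · intro x y h1 h2
    have hxy := lef_antisymm E h1 h2
    subst hxy
    exact ⟨{x}, hE1 x, Set.mem_singleton x, Set.mem_singleton x⟩

private lemma lef_fiber_iff [Finite V] {k : ℕ} (σ : V → V → Prop)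
    (hσ : IsAcyclicOrientation E σ)
    (hanti : ∀ e ∈ E, ∀ x ∈ e, ∀ y ∈ e, σ x y → σ y x → x = y) (f : V → Fin k) :
    ((∀ e ∈ E, ∀ x ∈ e, ∀ y ∈ e, x ≠ y → f x ≠ f y) ∧ Function.Surjective f) ∧ lef E f = σ ↔
      Function.Surjective f ∧ ∀ x y, σ x y → x ≠ y → f x < f y := by
  have hga : ∀ x y, σ x y → σ y x → x = y := fun x y hxy hyx => by
    obtain ⟨e, he, hx, hy⟩ := hσ.2.2.2.2 x y hxy hyx
    exact hanti e he x hx y hy hxy hyx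
  constructor
  · rintro ⟨⟨hp, hs⟩, heq⟩
    exact ⟨hs, fun x y hxy hne => lef_strict E (heq ▸ hxy) hne⟩
  · rintro ⟨hs, hstrict⟩
    have hp : ∀ e ∈ E, ∀ x ∈ e, ∀ y ∈ e, x ≠ y → f x ≠ f y := by
      intro e he x hx y hy hne
      have h2card : 2 ≤ e.ncard := two_le_ncard hx hy hne
      rcases (hσ.2.2.1 e he h2card).1 x hx y hy with h | h
      · exact (hstrict x y h hne).ne
      · exact (hstrict y x h hne.symm).ne'
    refine ⟨⟨hp, hs⟩, ?_⟩
    funext x y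
    apply propext
    constructor
    · intro h
      induction h with
      | refl => exact hσ.1 x
      | @tail c b h1 h2 ih =>
        obtain ⟨⟨e, he, hc, hb⟩, hlt⟩ := h2
        have hne : c ≠ b := fun h0 => absurd hlt (by rw [h0]; exact lt_irrefl _)
        have h2card : 2 ≤ e.ncard := two_le_ncard hc hb hne
        rcases (hσ.2.2.1 e he h2card).1 c hc b hb with h | h
        · exact hσ.2.1 ih h
        · exact absurd (hstrict b c h hne.symm) (not_lt.2 (le_of_lt hlt))
    · intro h
      by_cases hxy : x = y
      · subst hxy; exact Relation.ReflTransGen.refl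
      · have hnyx : ¬ σ y x := fun h0 => hxy (hga x y h h0)
        refine (Relation.TransGen.mono ?_ x y (hσ.2.2.2.1 x y h hnyx)).to_reflTransGen
        rintro a b ⟨hedge, hab, hba⟩
        have hne : a ≠ b := fun h0 => hba (h0 ▸ hab)
        exact ⟨hedge, hstrict a b hab hne⟩

end Orient

section Count
variable {V : Type u} [Fintype V] (E : Set (Set V))

private noncomputable def eCount (k : ℕ) : ℕ :=
  Nat.card {f : V → Fin k //
    (∀ e ∈ E, ∀ x ∈ e, ∀ y ∈ e, x ≠ y → f x ≠ f y) ∧ Function.Surjective f}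

private lemma sum_eCount (hE1 : ∀ x : V, {x} ∈ E) :
    (∑ k ∈ Finset.range (Fintype.card V + 1), (-1 : ℤ) ^ (Fintype.card V - k) * eCount E k)
      = Nat.card {le : V → V → Prop // IsAcyclicOrientation E le ∧
          ∀ e ∈ E, ∀ x ∈ e, ∀ y ∈ e, le x y → le y x → x = y} := by
  classical
  letI : Fintype {le : V → V → Prop // IsAcyclicOrientation E le ∧
      ∀ e ∈ E, ∀ x ∈ e, ∀ y ∈ e, le x y → le y x → x = y} := Fintype.ofFinite _
  have hk : ∀ k : ℕ, eCount E k = ∑ σ : {le : V → V → Prop // IsAcyclicOrientation E le ∧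
      ∀ e ∈ E, ∀ x ∈ e, ∀ y ∈ e, le x y → le y x → x = y}, SCount V σ.1 k := by
    intro k
    let T := {f : V → Fin k //
      (∀ e ∈ E, ∀ x ∈ e, ∀ y ∈ e, x ≠ y → f x ≠ f y) ∧ Function.Surjective f}
    let F : T → {le : V → V → Prop // IsAcyclicOrientation E le ∧
        ∀ e ∈ E, ∀ x ∈ e, ∀ y ∈ e, le x y → le y x → x = y} :=
      fun p => ⟨lef E p.1, lef_isAO E hE1 p.2.1⟩
    calc eCount E k = Nat.card T := rfl
      _ = Nat.card (Σ σ : {le : V → V → Prop // IsAcyclicOrientation E le ∧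
            ∀ e ∈ E, ∀ x ∈ e, ∀ y ∈ e, le x y → le y x → x = y}, {p : T // F p = σ}) :=
          Nat.card_congr (Equiv.sigmaFiberEquiv F).symm
      _ = ∑ σ : {le : V → V → Prop // IsAcyclicOrientation E le ∧
            ∀ e ∈ E, ∀ x ∈ e, ∀ y ∈ e, le x y → le y x → x = y},
            Nat.card {p : T // F p = σ} := nat_card_sigma _
      _ = ∑ σ : {le : V → V → Prop // IsAcyclicOrientation E le ∧
            ∀ e ∈ E, ∀ x ∈ e, ∀ y ∈ e, le x y → le y x → x = y},
            SCount V σ.1 k := by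
          refine Finset.sum_congr rfl fun σ _ => ?_
          apply Nat.card_congr
          refine
            { toFun := fun q => ⟨q.1.1,
                ((lef_fiber_iff E σ.1 σ.2.1 σ.2.2 q.1.1).1
                  ⟨q.1.2, congrArg Subtype.val q.2⟩)⟩
              invFun := fun g => ⟨⟨g.1, ?_⟩, ?_⟩
              left_inv := fun q => Subtype.ext (Subtype.ext rfl)
              right_inv := fun g => Subtype.ext rfl }
          · exact ((lef_fiber_iff E σ.1 σ.2.1 σ.2.2 g.1).2 g.2).1
          · exact Subtype.ext ((lef_fiber_iff E σ.1 σ.2.1 σ.2.2 g.1).2 g.2).2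
  have hga : ∀ σ : {le : V → V → Prop // IsAcyclicOrientation E le ∧
      ∀ e ∈ E, ∀ x ∈ e, ∀ y ∈ e, le x y → le y x → x = y},
      ∀ x y : V, σ.1 x y → σ.1 y x → x = y := by
    intro σ x y hxy hyx
    obtain ⟨e, he, hx, hy⟩ := σ.2.1.2.2.2.2 x y hxy hyx
    exact σ.2.2 e he x hx y hy hxy hyx
  calc (∑ k ∈ Finset.range (Fintype.card V + 1), (-1 : ℤ) ^ (Fintype.card V - k) * eCount E k)
      = ∑ k ∈ Finset.range (Fintype.card V + 1),
          ∑ σ : {le : V → V → Prop // IsAcyclicOrientation E le ∧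
            ∀ e ∈ E, ∀ x ∈ e, ∀ y ∈ e, le x y → le y x → x = y},
          (-1 : ℤ) ^ (Fintype.card V - k) * SCount V σ.1 k := by
        refine Finset.sum_congr rfl fun k _ => ?_
        rw [hk k, Nat.cast_sum, Finset.mul_sum]
    _ = ∑ σ : {le : V → V → Prop // IsAcyclicOrientation E le ∧
            ∀ e ∈ E, ∀ x ∈ e, ∀ y ∈ e, le x y → le y x → x = y},
          ∑ k ∈ Finset.range (Fintype.card V + 1),
          (-1 : ℤ) ^ (Fintype.card V - k) * SCount V σ.1 k := Finset.sum_comm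
    _ = ∑ σ : {le : V → V → Prop // IsAcyclicOrientation E le ∧
            ∀ e ∈ E, ∀ x ∈ e, ∀ y ∈ e, le x y → le y x → x = y}, (1 : ℤ) := by
        refine Finset.sum_congr rfl fun σ _ => ?_
        exact sum_SCount σ.1 (σ.2.1.1) (σ.2.1.2.1) (hga σ)
    _ = Nat.card {le : V → V → Prop // IsAcyclicOrientation E le ∧
          ∀ e ∈ E, ∀ x ∈ e, ∀ y ∈ e, le x y → le y x → x = y} := by
        rw [Finset.sum_const, Finset.card_univ, Nat.card_eq_fintype_card]
        simp

private lemma eCount_eq_zero {k : ℕ} (h : Fintype.card V < k) : eCount E k = 0 := by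
  have : IsEmpty {f : V → Fin k //
      (∀ e ∈ E, ∀ x ∈ e, ∀ y ∈ e, x ≠ y → f x ≠ f y) ∧ Function.Surjective f} := by
    constructor
    rintro ⟨f, -, hs⟩
    have := Fintype.card_le_of_surjective f hs
    simp only [Fintype.card_fin] at this
    omega
  exact Nat.card_of_isEmpty

private lemma card_colorings (N : ℕ) :
    Nat.card {f : V → Fin N // ∀ e ∈ E, ∀ x ∈ e, ∀ y ∈ e, x ≠ y → f x ≠ f y}
      = ∑ k ∈ Finset.range (N + 1), N.choose k * eCount E k := by
  classical
  let T := {f : V → Fin N // ∀ e ∈ E, ∀ x ∈ e, ∀ y ∈ e, x ≠ y → f x ≠ f y}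
  let F : T → Finset (Fin N) := fun p => univ.image p.1
  have hfib : ∀ S : Finset (Fin N), Nat.card {p : T // F p = S} = eCount E S.card := by
    intro S
    apply Nat.card_congr
    let β : {x // x ∈ S} ≃ Fin S.card := S.equivFin
    have hmemS : ∀ (q : {p : T // F p = S}) (v : V), q.1.1 v ∈ S := by
      intro q v
      have himg : univ.image q.1.1 = S := q.2
      have h := Finset.mem_image_of_mem q.1.1 (Finset.mem_univ v)
      rwa [himg] at h
    refine
      { toFun := fun q => ⟨fun v => β ⟨q.1.1 v, hmemS q v⟩, ?_, ?_⟩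
        invFun := fun g => ⟨⟨fun v => (β.symm (g.1 v)).1, ?_⟩, ?_⟩
        left_inv := ?_
        right_inv := ?_ }
    · -- proper
      intro e he x hx y hy hxy hgeq
      have := β.injective hgeq
      have hfeq : q.1.1 x = q.1.1 y := congrArg Subtype.val this
      exact q.1.2 e he x hx y hy hxy hfeq
    · -- surjective
      intro b
      obtain ⟨s0, hs0⟩ : ∃ s0 : {x // x ∈ S}, β.symm b = s0 := ⟨β.symm b, rfl⟩
      have himg : univ.image q.1.1 = S := q.2
      have hs0S : s0.1 ∈ univ.image q.1.1 := by rw [himg]; exact s0.2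
      obtain ⟨v, -, hv⟩ := Finset.mem_image.1 hs0S
      refine ⟨v, ?_⟩
      show β ⟨q.1.1 v, hmemS q v⟩ = b
      have heq : (⟨q.1.1 v, hmemS q v⟩ : {x // x ∈ S}) = s0 := Subtype.ext hv
      rw [heq, ← hs0, Equiv.apply_symm_apply]
    · -- proper of invFun
      intro e he x hx y hy hxy hfeq
      have : β.symm (g.1 x) = β.symm (g.1 y) := Subtype.ext hfeq
      exact g.2.1 e he x hx y hy hxy (β.symm.injective this)
    · -- image = S
      have hgsurj := g.2.2
      show univ.image (fun v => (β.symm (g.1 v)).1) = S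
      ext s
      simp only [Finset.mem_image, Finset.mem_univ, true_and]
      constructor
      · rintro ⟨v, rfl⟩
        exact (β.symm (g.1 v)).2
      · intro hs
        obtain ⟨v, hv⟩ := hgsurj (β ⟨s, hs⟩)
        refine ⟨v, ?_⟩
        rw [hv, Equiv.symm_apply_apply]
    · -- left inverse
      rintro ⟨⟨f, hf⟩, hS⟩
      apply Subtype.ext
      apply Subtype.ext
      funext v
      show (β.symm (β ⟨f v, _⟩)).1 = f v
      rw [Equiv.symm_apply_apply]
    · -- right inverse
      rintro ⟨g, hg⟩
      apply Subtype.ext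
      funext v
      show β ⟨(β.symm (g v)).1, _⟩ = g v
      have : (⟨(β.symm (g v)).1, _⟩ : {x // x ∈ S}) = β.symm (g v) := Subtype.ext rfl
      rw [this, Equiv.apply_symm_apply]
  calc Nat.card T = Nat.card (Σ S : Finset (Fin N), {p : T // F p = S}) :=
        Nat.card_congr (Equiv.sigmaFiberEquiv F).symm
    _ = ∑ S : Finset (Fin N), Nat.card {p : T // F p = S} := nat_card_sigma _
    _ = ∑ S : Finset (Fin N), eCount E S.card := Finset.sum_congr rfl fun S _ => hfib S
    _ = ∑ S ∈ (univ : Finset (Fin N)).powerset, eCount E S.card := by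
        rw [Finset.powerset_univ]
    _ = ∑ k ∈ Finset.range (N + 1), N.choose k * eCount E k := by
        rw [Finset.sum_powerset_apply_card]
        simp [Finset.card_univ, smul_eq_mul]

end Count

private lemma sign_flip (n : ℕ) (c : ℕ → ℕ) :
    (∑ k ∈ Finset.range (n + 1), (-1 : ℤ) ^ k * c k)
      = (-1 : ℤ) ^ n * ∑ k ∈ Finset.range (n + 1), (-1 : ℤ) ^ (n - k) * c k := by
  rw [Finset.mul_sum]
  refine Finset.sum_congr rfl fun k hk => ?_
  simp only [Finset.mem_range] at hk
  rw [← mul_assoc, ← pow_add]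
  have h2 : n + (n - k) = k + 2 * (n - k) := by omega
  rw [h2, pow_add, pow_mul]
  norm_num

private lemma descPochhammer_eval_neg_one (k : ℕ) :
    (descPochhammer ℚ k).eval (-1 : ℚ) = (-1) ^ k * k.factorial := by
  induction k with
  | zero => simp
  | succ k ih =>
    rw [descPochhammer_succ_eval, ih, Nat.factorial_succ]
    push_cast
    ring

theorem stmt15 {V : Type*} [Fintype V] [Nonempty V] (E : Set (Set V))
    (hE0 : ∅ ∈ E) (hE1 : ∀ x : V, {x} ∈ E)
    (P : Polynomial ℚ)
    (hP : ∀ N : ℕ, 1 ≤ N →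
      P.eval (N : ℚ) =
        Nat.card {f : V → Fin N //
          ∀ e ∈ E, ∀ x ∈ e, ∀ y ∈ e, x ≠ y → f x ≠ f y}) :
    P.eval (-1 : ℚ) =
      (-1 : ℚ) ^ Fintype.card V *
        Nat.card {le : V → V → Prop //
          IsAcyclicOrientation E le ∧
            ∀ e ∈ E, ∀ x ∈ e, ∀ y ∈ e, le x y → le y x → x = y} := by
  classical
  set n := Fintype.card V with hn
  obtain ⟨Q, hQdef⟩ : ∃ q : Polynomial ℚ, q = ∑ k ∈ Finset.range (n + 1),
      Polynomial.C ((eCount E k : ℚ) / k.factorial) * descPochhammer ℚ k := ⟨_, rfl⟩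
  have hQeval : ∀ N : ℕ, Q.eval (N : ℚ)
      = ∑ k ∈ Finset.range (n + 1), (N.choose k : ℚ) * eCount E k := by
    intro N
    rw [hQdef, Polynomial.eval_finset_sum]
    refine Finset.sum_congr rfl fun k _ => ?_
    rw [Polynomial.eval_mul, Polynomial.eval_C, descPochhammer_eval_eq_descFactorial,
      Nat.descFactorial_eq_factorial_mul_choose]
    have hk0 : (k.factorial : ℚ) ≠ 0 := Nat.cast_ne_zero.2 k.factorial_ne_zero
    push_cast
    field_simp
  have hcast : ∀ N : ℕ, 1 ≤ N → P.eval (N : ℚ) = Q.eval (N : ℚ) := by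
    intro N hN
    rw [hP N hN, hQeval N, card_colorings E N]
    have hbig1 : (∑ k ∈ Finset.range (N + 1), N.choose k * eCount E k)
        = ∑ k ∈ Finset.range (N + n + 2), N.choose k * eCount E k := by
      refine Finset.sum_subset (Finset.range_subset_range.2 (by omega)) ?_
      intro k hk hk2
      simp only [Finset.mem_range] at hk hk2
      rw [Nat.choose_eq_zero_of_lt (by omega), zero_mul]
    have hbig2 : (∑ k ∈ Finset.range (n + 1), (N.choose k : ℚ) * eCount E k)
        = ∑ k ∈ Finset.range (N + n + 2), (N.choose k : ℚ) * eCount E k := by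
      refine Finset.sum_subset (Finset.range_subset_range.2 (by omega)) ?_
      intro k hk hk2
      simp only [Finset.mem_range] at hk hk2
      rw [eCount_eq_zero E (by omega)]
      simp
    rw [hbig1, hbig2]
    push_cast
    rfl
  have hPQ : P = Q := by
    apply Polynomial.eq_of_infinite_eval_eq
    apply Set.infinite_of_injective_forall_mem (f := fun m : ℕ => ((m + 1 : ℕ) : ℚ))
    · intro a b hab
      have : (a + 1 : ℕ) = (b + 1 : ℕ) := Nat.cast_injective hab
      omega
    · intro m
      exact hcast (m + 1) (by omega)
  have hQm1 : Q.eval (-1 : ℚ) = ∑ k ∈ Finset.range (n + 1), (-1 : ℚ) ^ k * eCount E k := by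
    rw [hQdef, Polynomial.eval_finset_sum]
    refine Finset.sum_congr rfl fun k _ => ?_
    rw [Polynomial.eval_mul, Polynomial.eval_C, descPochhammer_eval_neg_one k]
    have hk0 : (k.factorial : ℚ) ≠ 0 := Nat.cast_ne_zero.2 k.factorial_ne_zero
    field_simp
  have hZ := sum_eCount E hE1
  have hsign := sign_flip n (eCount E)
  have hfinal : (∑ k ∈ Finset.range (n + 1), (-1 : ℚ) ^ k * eCount E k)
      = ((∑ k ∈ Finset.range (n + 1), (-1 : ℤ) ^ k * eCount E k : ℤ) : ℚ) := by
    push_cast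
    rfl
  rw [hPQ, hQm1, hfinal, hsign, hZ]
  push_cast
  ring
end

section
/- Let G be a hypergraph on a nonempty finite set V, let Γ(G) be the simple graph on V in which distinct vertices x and y are adjacent if and only if {x,y} ⊆ e for some edge e of G, and let P be a polynomial with rational coefficients such that for every integer N ≥ 1, P(N) equals the number of ∩-proper N-colourings of G. Then P(−1) = (−1)^{|V|} times the number of acyclic orientations of the simple graph Γ(G). -/
open Relation Polynomial

namespace Stanley

variable {V : Type*}

/-- Acyclic orientation of the graph with adjacency `A`. -/
def AO (A r : V → V → Prop) : Prop :=
  (∀ x y, A x y → Xor' (r x y) (r y x)) ∧ (∀ x y, r x y → A x y) ∧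
    ∀ x : V, ¬ Relation.TransGen r x x

/-- Adding a single arc `a → b` to an acyclic relation with no path `b ⇝ a`
keeps it acyclic. -/
theorem addArc {r' : V → V → Prop} {a b : V} (hab : a ≠ b)
    (hacy : ∀ x, ¬ TransGen r' x x) (hba : ¬ TransGen r' b a) :
    ∀ x, ¬ TransGen (fun x y => r' x y ∨ (x = a ∧ y = b)) x x := by
  have inv : ∀ x y, TransGen (fun x y => r' x y ∨ (x = a ∧ y = b)) x y →
      TransGen r' x y ∨ (ReflTransGen r' x a ∧ ReflTransGen r' b y) := by
    intro x y h
    induction h with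
    | single h =>
      rcases h with h | ⟨rfl, rfl⟩
      · exact Or.inl (TransGen.single h)
      · exact Or.inr ⟨ReflTransGen.refl, ReflTransGen.refl⟩
    | tail _ h ih =>
      rcases h with h | ⟨rfl, rfl⟩
      · rcases ih with ih | ⟨h1, h2⟩
        · exact Or.inl (ih.tail h)
        · exact Or.inr ⟨h1, h2.tail h⟩
      · rcases ih with ih | ⟨h1, h2⟩
        · exact Or.inr ⟨ih.to_reflTransGen, ReflTransGen.refl⟩
        · rcases reflTransGen_iff_eq_or_transGen.1 h2 with rfl | h2
          · exact absurd rfl hab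
          · exact absurd h2 hba
  intro x hx
  rcases inv x x hx with h | ⟨h1, h2⟩
  · exact hacy x h
  · rcases reflTransGen_iff_eq_or_transGen.1 (h2.trans h1) with rfl | h
    · exact hab rfl
    · exact hba h

/-- lift-compatibility: `a` is a lift of `x` w.r.t. identifying `v` with `u`. -/
def Lifts (u v a x : V) : Prop := a = x ∨ (x = u ∧ a = v)

theorem lifts_pair {u v a b x : V} (ha : Lifts u v a x) (hb : Lifts u v b x) :
    a = b ∨ ((a = u ∧ b = v) ∨ (a = v ∧ b = u)) := by
  rcases ha with rfl | ⟨rfl, rfl⟩ <;> rcases hb with h | ⟨h, rfl⟩ <;> subst_vars <;> tauto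

/-- Gluing lemma: if `s`-arcs lift to arcs of an acyclic `r'` with `u` and `v`
identified, and there is no `r'`-path between `u` and `v`, then `s` is acyclic. -/
theorem glue {r' : V → V → Prop} {u v : V}
    (hacy : ∀ x, ¬ TransGen r' x x)
    (huv : ¬ TransGen r' u v) (hvu : ¬ TransGen r' v u)
    {s : V → V → Prop}
    (hs : ∀ x y, s x y → ∃ a b, r' a b ∧ Lifts u v a x ∧ Lifts u v b y) :
    ∀ x, ¬ TransGen s x x := by
  have key : ∀ a b : V, a = u ∨ a = v → b = u ∨ b = v → ¬ TransGen r' a b := by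
    rintro a b h1 h2
    rcases h1 with h1 | h1 <;> rcases h2 with h2 | h2 <;> rw [h1, h2]
    exacts [hacy u, huv, hvu, hacy v]
  have inv : ∀ x y, TransGen s x y →
      (∃ a b, Lifts u v a x ∧ Lifts u v b y ∧ TransGen r' a b) ∨
      (∃ a b, Lifts u v a x ∧ Lifts u v b y ∧
        ((TransGen r' a u ∧ TransGen r' v b) ∨ (TransGen r' a v ∧ TransGen r' u b))) := by
    intro x y h
    induction h with
    | single h =>
      obtain ⟨a, b, hab, ha, hb⟩ := hs _ _ h
      exact Or.inl ⟨a, b, ha, hb, TransGen.single hab⟩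
    | tail _ h ih =>
      obtain ⟨a', b', hab', ha', hb'⟩ := hs _ _ h
      rcases ih with ⟨a, c, ha, hc, hac⟩ | ⟨a, c, ha, hc, hcase⟩
      · rcases lifts_pair hc ha' with rfl | (⟨rfl, rfl⟩ | ⟨rfl, rfl⟩)
        · exact Or.inl ⟨a, b', ha, hb', hac.tail hab'⟩
        · exact Or.inr ⟨a, b', ha, hb', Or.inl ⟨hac, TransGen.single hab'⟩⟩
        · exact Or.inr ⟨a, b', ha, hb', Or.inr ⟨hac, TransGen.single hab'⟩⟩
      · rcases lifts_pair hc ha' with rfl | (⟨rfl, rfl⟩ | ⟨rfl, rfl⟩)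
        · rcases hcase with ⟨h1, h2⟩ | ⟨h1, h2⟩
          · exact Or.inr ⟨a, b', ha, hb', Or.inl ⟨h1, h2.tail hab'⟩⟩
          · exact Or.inr ⟨a, b', ha, hb', Or.inr ⟨h1, h2.tail hab'⟩⟩
        · exact absurd hcase (by
            rintro (⟨_, h2⟩ | ⟨_, h2⟩)
            · exact hvu h2
            · exact hacy _ h2)
        · exact absurd hcase (by
            rintro (⟨_, h2⟩ | ⟨_, h2⟩)
            · exact hacy _ h2
            · exact huv h2)
  intro x hx
  rcases inv x x hx with ⟨a, b, ha, hb, hab⟩ | ⟨a, b, ha, hb, hcase⟩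
  · rcases lifts_pair ha hb with rfl | (⟨rfl, rfl⟩ | ⟨rfl, rfl⟩)
    · exact hacy a hab
    · exact huv hab
    · exact hvu hab
  · rcases lifts_pair ha hb with rfl | (⟨rfl, rfl⟩ | ⟨rfl, rfl⟩)
    · rcases hcase with ⟨h1, h2⟩ | ⟨h1, h2⟩
      · exact hvu (h2.trans h1)
      · exact huv (h2.trans h1)
    · rcases hcase with ⟨h1, _⟩ | ⟨h1, _⟩
      · exact hacy _ h1
      · exact huv h1
    · rcases hcase with ⟨h1, h2⟩ | ⟨h1, _⟩
      · exact hvu h2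
      · exact hacy _ h1

/-- Deletion of the edge `{u,v}`. -/
def Del (A : V → V → Prop) (u v : V) : V → V → Prop :=
  fun x y => A x y ∧ ¬((x = u ∧ y = v) ∨ (x = v ∧ y = u))

/-- Contraction of the edge `{u,v}` (the vertex `v` becomes isolated,
its edges moved to `u`). -/
def Ctr (A : V → V → Prop) (u v : V) : V → V → Prop :=
  fun x y => x ≠ y ∧ x ≠ v ∧ y ≠ v ∧ (A x y ∨ (x = u ∧ A v y) ∨ (y = u ∧ A x v))

section DC

variable {A : V → V → Prop} {u v : V}

/-- delete the arc on `{u,v}` from an orientation. -/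
def delo (u v : V) (r : V → V → Prop) : V → V → Prop :=
  fun x y => r x y ∧ ¬((x = u ∧ y = v) ∨ (x = v ∧ y = u))

/-- contract an orientation of `Del A u v`. -/
def ctro (A : V → V → Prop) (u v : V) (r' : V → V → Prop) : V → V → Prop :=
  fun x y => Ctr A u v x y ∧ (r' x y ∨ (x = u ∧ r' v y) ∨ (y = u ∧ r' x v))

open Classical in
/-- the projection collapsing `v` to `u`. -/
noncomputable def pr (u v : V) (x : V) : V := if x = v then u else x

/-- lift an orientation of `Ctr A u v` to one of `Del A u v`. -/
noncomputable def lifto (A : V → V → Prop) (u v : V) (s : V → V → Prop) : V → V → Prop :=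
  fun x y => Del A u v x y ∧ s (pr u v x) (pr u v y)

theorem delo_le (r : V → V → Prop) : ∀ x y, delo u v r x y → r x y := fun _ _ h => h.1

theorem pr_self : pr u v u = u := by
  rw [pr]; split <;> rfl

theorem pr_v : pr u v v = u := by rw [pr, if_pos rfl]

theorem pr_other {x : V} (h : x ≠ v) : pr u v x = x := by rw [pr, if_neg h]

variable (hsym : ∀ x y, A x y → A y x) (hirr : ∀ x, ¬ A x x) (huv : A u v)

include hirr huv in
theorem uv_ne : u ≠ v := fun h => hirr v (h ▸ huv)

include hirr in
theorem A_ne {x y : V} (h : A x y) : x ≠ y := fun e => hirr y (e ▸ h)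

include hirr in
theorem del_ne {x y : V} (h : Del A u v x y) : x ≠ y := A_ne hirr h.1

include hsym in
theorem ctr_symm {x y : V} (h : Ctr A u v x y) : Ctr A u v y x := by
  obtain ⟨h1, h2, h3, h4⟩ := h
  refine ⟨h1.symm, h3, h2, ?_⟩
  rcases h4 with h | ⟨e, h⟩ | ⟨e, h⟩
  · exact Or.inl (hsym x y h)
  · exact Or.inr (Or.inr ⟨e, hsym v y h⟩)
  · exact Or.inr (Or.inl ⟨e, hsym x v h⟩)

include hsym in
theorem delAO {r : V → V → Prop} (hr : AO A r) : AO (Del A u v) (delo u v r) := by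
  obtain ⟨hor, hsup, hacy⟩ := hr
  refine ⟨?_, ?_, ?_⟩
  · intro x y ⟨hA, hp⟩
    have hp' : ¬((y = u ∧ x = v) ∨ (y = v ∧ x = u)) := by tauto
    rcases hor x y hA with ⟨h1, h2⟩ | ⟨h1, h2⟩
    · exact Or.inl ⟨⟨h1, hp⟩, fun h => h2 h.1⟩
    · exact Or.inr ⟨⟨h1, hp'⟩, fun h => h2 h.1⟩
  · exact fun x y ⟨h1, h2⟩ => ⟨hsup x y h1, h2⟩
  · exact fun x hx => hacy x (TransGen.mono (fun a b h => h.1) _ _ hx)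

section inner
variable {r' : V → V → Prop} (hr' : AO (Del A u v) r')
  (hNuv : ¬ TransGen r' u v) (hNvu : ¬ TransGen r' v u)

include hr' hNuv hNvu hsym hirr huv in
theorem ctrAO : AO (Ctr A u v) (ctro A u v r') := by
  obtain ⟨hor, hsup, hacy⟩ := hr'
  have hXor : ∀ x y, Del A u v x y → r' x y ∨ r' y x := by
    intro x y h
    rcases hor x y h with ⟨h1, _⟩ | ⟨h1, _⟩
    exacts [Or.inl h1, Or.inr h1]
  have notboth : ∀ x y, ctro A u v r' x y → ctro A u v r' y x → False := by
    rintro x y ⟨hc, hd⟩ ⟨hc', hd'⟩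
    obtain ⟨hxy, hxv, hyv, _⟩ := hc
    rcases hd with h | ⟨hx, h⟩ | ⟨hy, h⟩ <;> rcases hd' with g | ⟨hy', g⟩ | ⟨hx', g⟩
    · rcases hor x y (hsup x y h) with ⟨_, h2⟩ | ⟨_, h2⟩
      exacts [h2 g, h2 h]
    · exact hNvu ((TransGen.single g).tail (hy' ▸ h))
    · exact hNuv ((TransGen.single (hx' ▸ h)).tail g)
    · exact hNvu ((TransGen.single h).tail (hx ▸ g))
    · exact hxy (hx.trans hy'.symm)
    · exact hacy v ((TransGen.single h).tail g)
    · exact hNuv ((TransGen.single (hy ▸ g)).tail h)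
    · exact hacy v ((TransGen.single g).tail h)
    · exact hxy (hx'.trans hy.symm)
  have atleast : ∀ x y, Ctr A u v x y → ctro A u v r' x y ∨ ctro A u v r' y x := by
    rintro x y hc
    obtain ⟨hxy, hxv, hyv, hA⟩ := hc
    rcases hA with h | ⟨hx, h⟩ | ⟨hy, h⟩
    · have hd : Del A u v x y := ⟨h, by rintro (⟨_, e⟩ | ⟨e, _⟩); exacts [hyv e, hxv e]⟩
      rcases hXor x y hd with h1 | h1
      · exact Or.inl ⟨⟨hxy, hxv, hyv, Or.inl h⟩, Or.inl h1⟩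
      · exact Or.inr ⟨⟨hxy.symm, hyv, hxv, Or.inl (hsym x y h)⟩, Or.inl h1⟩
    · have hd : Del A u v v y := ⟨h, by
        rintro (⟨e1, _⟩ | ⟨_, e2⟩)
        · exact uv_ne hirr huv e1.symm
        · exact hxy (hx.trans e2.symm)⟩
      rcases hXor v y hd with h1 | h1
      · exact Or.inl ⟨⟨hxy, hxv, hyv, Or.inr (Or.inl ⟨hx, h⟩)⟩, Or.inr (Or.inl ⟨hx, h1⟩)⟩
      · exact Or.inr ⟨⟨hxy.symm, hyv, hxv, Or.inr (Or.inr ⟨hx, hsym v y h⟩)⟩,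
          Or.inr (Or.inr ⟨hx, h1⟩)⟩
    · have hd : Del A u v x v := ⟨h, by
        rintro (⟨e1, _⟩ | ⟨_, e2⟩)
        · exact hxy (e1.trans hy.symm)
        · exact uv_ne hirr huv e2.symm⟩
      rcases hXor x v hd with h1 | h1
      · exact Or.inl ⟨⟨hxy, hxv, hyv, Or.inr (Or.inr ⟨hy, h⟩)⟩, Or.inr (Or.inr ⟨hy, h1⟩)⟩
      · exact Or.inr ⟨⟨hxy.symm, hyv, hxv, Or.inr (Or.inl ⟨hy, hsym x v h⟩)⟩,
          Or.inr (Or.inl ⟨hy, h1⟩)⟩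
  refine ⟨?_, fun x y h => h.1, ?_⟩
  · intro x y hc
    rcases atleast x y hc with h | h
    · exact Or.inl ⟨h, fun h' => notboth x y h h'⟩
    · exact Or.inr ⟨h, fun h' => notboth x y h' h⟩
  · refine glue hacy hNuv hNvu ?_
    rintro x y ⟨hc, hd⟩
    rcases hd with h | ⟨hx, h⟩ | ⟨hy, h⟩
    · exact ⟨x, y, h, Or.inl rfl, Or.inl rfl⟩
    · exact ⟨v, y, h, Or.inr ⟨hx, rfl⟩, Or.inl rfl⟩
    · exact ⟨x, v, h, Or.inl rfl, Or.inr ⟨hy, rfl⟩⟩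

include hr' hNuv hNvu hsym hirr huv in
theorem lifto_ctro : lifto A u v (ctro A u v r') = r' := by
  obtain ⟨hor, hsup, hacy⟩ := hr'
  have hnuv := uv_ne hirr huv
  funext x y
  apply propext
  constructor
  · rintro ⟨hd, hc, he⟩
    have hxy := del_ne hirr hd
    by_cases hx : x = v <;> by_cases hy : y = v
    · exact absurd (hx.trans hy.symm) hxy
    · -- x = v
      have hd' : Del A u v v y := hx ▸ hd
      rw [hx, pr_v, pr_other hy] at he
      have hyu : y ≠ u := fun e => hd.2 (Or.inr ⟨hx, e⟩)
      rw [hx]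
      rcases he with h | ⟨_, h⟩ | ⟨h, _⟩
      · by_contra hn
        rcases hor v y hd' with ⟨h1, _⟩ | ⟨h1, _⟩
        · exact hn h1
        · exact hNuv ((TransGen.single h).tail h1)
      · exact h
      · exact absurd h hyu
    · -- y = v
      have hd' : Del A u v x v := hy ▸ hd
      rw [hy, pr_v, pr_other hx] at he
      have hxu : x ≠ u := fun e => hd.2 (Or.inl ⟨e, hy⟩)
      rw [hy]
      rcases he with h | ⟨h, _⟩ | ⟨_, h⟩
      · by_contra hn
        rcases hor x v hd' with ⟨h1, _⟩ | ⟨h1, _⟩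
        · exact hn h1
        · exact hNvu ((TransGen.single h1).tail h)
      · exact absurd h hxu
      · exact h
    · rw [pr_other hx, pr_other hy] at he
      rcases he with h | ⟨hxu, h⟩ | ⟨hyu, h⟩
      · exact h
      · -- x = u, r' v y
        have hd' : Del A u v u y := hxu ▸ hd
        rw [hxu]
        by_contra hn
        rcases hor u y hd' with ⟨h1, _⟩ | ⟨h1, _⟩
        · exact hn h1
        · exact hNvu ((TransGen.single h).tail h1)
      · have hd' : Del A u v x u := hyu ▸ hd
        rw [hyu]
        by_contra hn
        rcases hor x u hd' with ⟨h1, _⟩ | ⟨h1, _⟩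
        · exact hn h1
        · exact hNuv ((TransGen.single h1).tail h)
  · intro h
    have hd := hsup x y h
    refine ⟨hd, ?_⟩
    have hxy := del_ne hirr hd
    have hA : A x y := hd.1
    by_cases hx : x = v <;> by_cases hy : y = v
    · exact absurd (hx.trans hy.symm) hxy
    · rw [hx, pr_v, pr_other hy]
      have hyu : y ≠ u := fun e => hd.2 (Or.inr ⟨hx, e⟩)
      exact ⟨⟨hyu.symm, hnuv, hy, Or.inr (Or.inl ⟨rfl, hx ▸ hA⟩)⟩,
        Or.inr (Or.inl ⟨rfl, hx ▸ h⟩)⟩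
    · rw [hy, pr_v, pr_other hx]
      have hxu : x ≠ u := fun e => hd.2 (Or.inl ⟨e, hy⟩)
      exact ⟨⟨hxu, hx, hnuv, Or.inr (Or.inr ⟨rfl, hy ▸ hA⟩)⟩,
        Or.inr (Or.inr ⟨rfl, hy ▸ h⟩)⟩
    · rw [pr_other hx, pr_other hy]
      exact ⟨⟨hxy, hx, hy, Or.inl hA⟩, Or.inl h⟩

end inner

section inner2
variable {s : V → V → Prop}

theorem lifto_acy (hs : AO (Ctr A u v) s) : ∀ x, ¬ TransGen (lifto A u v s) x x :=
  fun x hx => hs.2.2 (pr u v x) (hx.lift (pr u v) (fun _ _ h => h.2))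

theorem lifto_nuv (hs : AO (Ctr A u v) s) : ¬ TransGen (lifto A u v s) u v := by
  intro h
  have h2 := h.lift (pr u v) (fun _ _ h => h.2)
  rw [Function.onFun, pr_self, pr_v] at h2
  exact hs.2.2 u h2

theorem lifto_nvu (hs : AO (Ctr A u v) s) : ¬ TransGen (lifto A u v s) v u := by
  intro h
  have h2 := h.lift (pr u v) (fun _ _ h => h.2)
  rw [Function.onFun, pr_self, pr_v] at h2
  exact hs.2.2 u h2

include hirr huv in
theorem ctr_pr {x y : V} (hd : Del A u v x y) : Ctr A u v (pr u v x) (pr u v y) := by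
  have hnuv := uv_ne hirr huv
  have hxy := del_ne hirr hd
  have hA := hd.1
  by_cases hx : x = v <;> by_cases hy : y = v
  · exact absurd (hx.trans hy.symm) hxy
  · rw [hx, pr_v, pr_other hy]
    have hyu : y ≠ u := fun e => hd.2 (Or.inr ⟨hx, e⟩)
    exact ⟨hyu.symm, hnuv, hy, Or.inr (Or.inl ⟨rfl, hx ▸ hA⟩)⟩
  · rw [hy, pr_v, pr_other hx]
    have hxu : x ≠ u := fun e => hd.2 (Or.inl ⟨e, hy⟩)
    exact ⟨hxu, hx, hnuv, Or.inr (Or.inr ⟨rfl, hy ▸ hA⟩)⟩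
  · rw [pr_other hx, pr_other hy]
    exact ⟨hxy, hx, hy, Or.inl hA⟩

include hsym hirr huv in
theorem liftAO (hs : AO (Ctr A u v) s) : AO (Del A u v) (lifto A u v s) := by
  refine ⟨?_, fun x y h => h.1, lifto_acy hs⟩
  intro x y hd
  have hd' : Del A u v y x := ⟨hsym _ _ hd.1, by have := hd.2; tauto⟩
  have hc := ctr_pr hirr huv hd
  rcases hs.1 _ _ hc with ⟨h1, h2⟩ | ⟨h1, h2⟩
  · exact Or.inl ⟨⟨hd, h1⟩, fun h => h2 h.2⟩
  · exact Or.inr ⟨⟨hd', h1⟩, fun h => h2 h.2⟩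

include hsym hirr huv in
theorem ctro_lifto (hs : AO (Ctr A u v) s) : ctro A u v (lifto A u v s) = s := by
  have hnuv := uv_ne hirr huv
  funext x y
  apply propext
  constructor
  · rintro ⟨hc, he⟩
    obtain ⟨hxy, hxv, hyv, _⟩ := hc
    rcases he with ⟨hd, h⟩ | ⟨hxu, hd, h⟩ | ⟨hyu, hd, h⟩
    · rwa [pr_other hxv, pr_other hyv] at h
    · rw [pr_v, pr_other hyv] at h
      rw [hxu]; exact h
    · rw [pr_other hxv, pr_v] at h
      rw [hyu]; exact h
  · intro h
    obtain ⟨hxy, hxv, hyv, hA⟩ := hs.2.1 x y h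
    refine ⟨⟨hxy, hxv, hyv, hA⟩, ?_⟩
    rcases hA with hA | ⟨hxu, hA⟩ | ⟨hyu, hA⟩
    · exact Or.inl ⟨⟨hA, by rintro (⟨_, e⟩ | ⟨e, _⟩); exacts [hyv e, hxv e]⟩, by
        rw [pr_other hxv, pr_other hyv]; exact h⟩
    · refine Or.inr (Or.inl ⟨hxu, ⟨hA, ?_⟩, ?_⟩)
      · rintro (⟨e1, _⟩ | ⟨_, e2⟩)
        · exact hnuv e1.symm
        · exact hxy (hxu.trans e2.symm)
      · rw [pr_v, pr_other hyv, ← hxu]; exact h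
    · refine Or.inr (Or.inr ⟨hyu, ⟨hA, ?_⟩, ?_⟩)
      · rintro (⟨e1, _⟩ | ⟨_, e2⟩)
        · exact hxy (e1.trans hyu.symm)
        · exact hnuv e2.symm
      · rw [pr_other hxv, pr_v, ← hyu]; exact h

end inner2

include hsym hirr huv in
theorem extendAO {r' : V → V → Prop} (hr' : AO (Del A u v) r') {a b : V}
    (hab : (a = u ∧ b = v) ∨ (a = v ∧ b = u)) (hnb : ¬ TransGen r' b a) :
    AO A (fun x y => r' x y ∨ (x = a ∧ y = b)) := by
  obtain ⟨hor, hsup, hacy⟩ := hr'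
  have hnuv := uv_ne hirr huv
  have hab' : a ≠ b := by
    rcases hab with ⟨e1, e2⟩ | ⟨e1, e2⟩ <;> rw [e1, e2]
    exacts [hnuv, hnuv.symm]
  refine ⟨?_, ?_, ?_⟩
  · intro x y hA
    by_cases hp : (x = u ∧ y = v) ∨ (x = v ∧ y = u)
    · have h1 : ¬ r' x y := fun h => (hsup x y h).2 hp
      have h2 : ¬ r' y x := fun h => (hsup y x h).2 (by tauto)
      rcases hp with ⟨e1, e2⟩ | ⟨e1, e2⟩ <;> rcases hab with ⟨f1, f2⟩ | ⟨f1, f2⟩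
      · refine Or.inl ⟨Or.inr ⟨e1.trans f1.symm, e2.trans f2.symm⟩, ?_⟩
        rintro (h | ⟨g1, g2⟩)
        · exact h2 h
        · exact hnuv ((f1.symm.trans g1.symm).trans e2)
      · refine Or.inr ⟨Or.inr ⟨e2.trans f1.symm, e1.trans f2.symm⟩, ?_⟩
        rintro (h | ⟨g1, g2⟩)
        · exact h1 h
        · exact hnuv (e1.symm.trans (g1.trans f1))
      · refine Or.inr ⟨Or.inr ⟨e2.trans f1.symm, e1.trans f2.symm⟩, ?_⟩
        rintro (h | ⟨g1, g2⟩)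
        · exact h1 h
        · exact hnuv ((f1.symm.trans g1.symm).trans e1)
      · refine Or.inl ⟨Or.inr ⟨e1.trans f1.symm, e2.trans f2.symm⟩, ?_⟩
        rintro (h | ⟨g1, g2⟩)
        · exact h2 h
        · exact hnuv ((e2.symm.trans g1).trans f1)
    · have hd : Del A u v x y := ⟨hA, hp⟩
      have harc1 : ¬(x = a ∧ y = b) := fun ⟨g1, g2⟩ => hp (by
        rcases hab with ⟨f1, f2⟩ | ⟨f1, f2⟩
        · exact Or.inl ⟨g1.trans f1, g2.trans f2⟩
        · exact Or.inr ⟨g1.trans f1, g2.trans f2⟩)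
      have harc2 : ¬(y = a ∧ x = b) := fun ⟨g1, g2⟩ => hp (by
        rcases hab with ⟨f1, f2⟩ | ⟨f1, f2⟩
        · exact Or.inr ⟨g2.trans f2, g1.trans f1⟩
        · exact Or.inl ⟨g2.trans f2, g1.trans f1⟩)
      rcases hor x y hd with ⟨h1, h2⟩ | ⟨h1, h2⟩
      · exact Or.inl ⟨Or.inl h1, by rintro (h | h); exacts [h2 h, harc2 h]⟩
      · exact Or.inr ⟨Or.inl h1, by rintro (h | h); exacts [h2 h, harc1 h]⟩
  · rintro x y (h | ⟨g1, g2⟩)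
    · exact (hsup x y h).1
    · rw [g1, g2]
      rcases hab with ⟨f1, f2⟩ | ⟨f1, f2⟩ <;> rw [f1, f2]
      exacts [huv, hsym u v huv]
  · exact addArc hab' hacy hnb

theorem delo_of_del {r' : V → V → Prop} (hsup : ∀ x y, r' x y → Del A u v x y)
    {a b : V} (hab : (a = u ∧ b = v) ∨ (a = v ∧ b = u)) :
    delo u v (fun x y => r' x y ∨ (x = a ∧ y = b)) = r' := by
  funext x y
  apply propext
  constructor
  · rintro ⟨h | ⟨g1, g2⟩, hnp⟩
    · exact h
    · exfalso
      apply hnp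
      rcases hab with ⟨f1, f2⟩ | ⟨f1, f2⟩
      · exact Or.inl ⟨g1.trans f1, g2.trans f2⟩
      · exact Or.inr ⟨g1.trans f1, g2.trans f2⟩
  · exact fun h => ⟨Or.inl h, (hsup x y h).2⟩

include hirr in
theorem delo_or_arc {r : V → V → Prop} (hr : AO A r) (hrvu : r v u) (hnuv : ¬ r u v) :
    (fun x y => delo u v r x y ∨ (x = v ∧ y = u)) = r := by
  funext x y
  apply propext
  constructor
  · rintro (⟨h, _⟩ | ⟨g1, g2⟩)
    · exact h
    · rw [g1, g2]; exact hrvu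
  · intro hxy
    by_cases hp : (x = u ∧ y = v) ∨ (x = v ∧ y = u)
    · rcases hp with ⟨g1, g2⟩ | ⟨g1, g2⟩
      · exfalso; apply hnuv; rw [← g1, ← g2]; exact hxy
      · exact Or.inr ⟨g1, g2⟩
    · exact Or.inl ⟨hxy, hp⟩

include hirr in
theorem delo_or_arc' {r : V → V → Prop} (hr : AO A r) (hruv : r u v) (hnvu : ¬ r v u) :
    (fun x y => delo u v r x y ∨ (x = u ∧ y = v)) = r := by
  funext x y
  apply propext
  constructor
  · rintro (⟨h, _⟩ | ⟨g1, g2⟩)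
    · exact h
    · rw [g1, g2]; exact hruv
  · intro hxy
    by_cases hp : (x = u ∧ y = v) ∨ (x = v ∧ y = u)
    · rcases hp with ⟨g1, g2⟩ | ⟨g1, g2⟩
      · exact Or.inr ⟨g1, g2⟩
      · exfalso; apply hnvu; rw [← g1, ← g2]; exact hxy
    · exact Or.inl ⟨hxy, hp⟩

open Classical in
noncomputable def Fmap : {r : V → V → Prop // AO A r} →
    {r' : V → V → Prop // AO (Del A u v) r'} ⊕ {s : V → V → Prop // AO (Ctr A u v) s} := fun p =>
  if h : p.1 u v ∨ TransGen (delo u v p.1) v u then Sum.inl ⟨delo u v p.1, delAO hsym p.2⟩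
  else Sum.inr ⟨ctro A u v (delo u v p.1), by
    have hnuv' : ¬ p.1 u v := fun h' => h (Or.inl h')
    have hrvu : p.1 v u := by
      rcases p.2.1 u v huv with ⟨h1, _⟩ | ⟨h1, _⟩
      · exact absurd h1 hnuv'
      · exact h1
    have hNvu : ¬ TransGen (delo u v p.1) v u := fun t => h (Or.inr t)
    have hNuv : ¬ TransGen (delo u v p.1) u v :=
      fun t => p.2.2.2 u ((TransGen.mono (delo_le _) _ _ t).tail hrvu)
    exact ctrAO hsym hirr huv (delAO hsym p.2) hNuv hNvu⟩

open Classical in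
noncomputable def Gmap :
    ({r' : V → V → Prop // AO (Del A u v) r'} ⊕ {s : V → V → Prop // AO (Ctr A u v) s}) →
    {r : V → V → Prop // AO A r} := fun z =>
  match z with
  | Sum.inl ⟨r', hr'⟩ =>
    if h : TransGen r' v u then
      ⟨fun x y => r' x y ∨ (x = v ∧ y = u),
        extendAO hsym hirr huv hr' (Or.inr ⟨rfl, rfl⟩) (fun t => hr'.2.2 u (t.trans h))⟩
    else
      ⟨fun x y => r' x y ∨ (x = u ∧ y = v),
        extendAO hsym hirr huv hr' (Or.inl ⟨rfl, rfl⟩) h⟩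
  | Sum.inr ⟨s, hs⟩ =>
    ⟨fun x y => lifto A u v s x y ∨ (x = v ∧ y = u),
      extendAO hsym hirr huv (liftAO hsym hirr huv hs) (Or.inr ⟨rfl, rfl⟩) (lifto_nuv hs)⟩

include hsym hirr huv in
theorem GF : ∀ p, Gmap hsym hirr huv (Fmap hsym hirr huv p) = p := by
  rintro ⟨r, hr⟩
  by_cases h : r u v ∨ TransGen (delo u v r) v u
  · rw [Fmap, dif_pos h, Gmap]
    by_cases h2 : TransGen (delo u v r) v u
    · rw [dif_pos h2]
      have hnuv' : ¬ r u v := fun h' => hr.2.2 v ((TransGen.mono (delo_le _) _ _ h2).tail h')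
      have hrvu : r v u := by
        rcases hr.1 u v huv with ⟨h1, _⟩ | ⟨h1, _⟩
        · exact absurd h1 hnuv'
        · exact h1
      exact Subtype.ext (delo_or_arc hirr hr hrvu hnuv')
    · rw [dif_neg h2]
      have hruv : r u v := h.resolve_right h2
      have hnvu : ¬ r v u := by
        rcases hr.1 u v huv with ⟨_, h2'⟩ | ⟨h1', h2'⟩
        · exact h2'
        · exact absurd hruv h2'
      exact Subtype.ext (delo_or_arc' hirr hr hruv hnvu)
  · rw [Fmap, dif_neg h, Gmap]
    have hnuv' : ¬ r u v := fun h' => h (Or.inl h')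
    have hrvu : r v u := by
      rcases hr.1 u v huv with ⟨h1, _⟩ | ⟨h1, _⟩
      · exact absurd h1 hnuv'
      · exact h1
    have hNvu : ¬ TransGen (delo u v r) v u := fun t => h (Or.inr t)
    have hNuv : ¬ TransGen (delo u v r) u v :=
      fun t => hr.2.2 u ((TransGen.mono (delo_le _) _ _ t).tail hrvu)
    apply Subtype.ext
    dsimp only
    rw [lifto_ctro hsym hirr huv (delAO hsym hr) hNuv hNvu]
    exact delo_or_arc hirr hr hrvu hnuv'

include hsym hirr huv in
theorem FG : ∀ z, Fmap hsym hirr huv (Gmap hsym hirr huv z) = z := by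
  rintro (⟨r', hr'⟩ | ⟨s, hs⟩)
  · rw [Gmap]
    by_cases h2 : TransGen r' v u
    · rw [dif_pos h2, Fmap]
      have hd : delo u v (fun x y => r' x y ∨ (x = v ∧ y = u)) = r' :=
        delo_of_del hr'.2.1 (Or.inr ⟨rfl, rfl⟩)
      rw [dif_pos (Or.inr (hd.symm ▸ h2))]
      exact congrArg Sum.inl (Subtype.ext hd)
    · rw [dif_neg h2, Fmap]
      have hd : delo u v (fun x y => r' x y ∨ (x = u ∧ y = v)) = r' :=
        delo_of_del hr'.2.1 (Or.inl ⟨rfl, rfl⟩)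
      rw [dif_pos (Or.inl (Or.inr ⟨rfl, rfl⟩))]
      exact congrArg Sum.inl (Subtype.ext hd)
  · rw [Gmap, Fmap]
    have hd : delo u v (fun x y => lifto A u v s x y ∨ (x = v ∧ y = u)) = lifto A u v s :=
      delo_of_del (liftAO hsym hirr huv hs).2.1 (Or.inr ⟨rfl, rfl⟩)
    have hcond : ¬ (((fun x y => lifto A u v s x y ∨ (x = v ∧ y = u)) u v) ∨
        TransGen (delo u v (fun x y => lifto A u v s x y ∨ (x = v ∧ y = u))) v u) := by
      rintro (h | h)
      · rcases h with ⟨hdel, _⟩ | ⟨e, _⟩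
        · exact hdel.2 (Or.inl ⟨rfl, rfl⟩)
        · exact uv_ne hirr huv e
      · rw [hd] at h
        exact lifto_nvu hs h
    rw [dif_neg hcond]
    refine congrArg Sum.inr (Subtype.ext ?_)
    dsimp only
    rw [hd]
    exact ctro_lifto hsym hirr huv hs

include hsym hirr huv in
theorem ao_split [Finite V] :
    Nat.card {r : V → V → Prop // AO A r} =
      Nat.card {r' : V → V → Prop // AO (Del A u v) r'} +
        Nat.card {s : V → V → Prop // AO (Ctr A u v) s} := by
  have e : {r : V → V → Prop // AO A r} ≃
      ({r' : V → V → Prop // AO (Del A u v) r'} ⊕ {s : V → V → Prop // AO (Ctr A u v) s}) :=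
    ⟨Fmap hsym hirr huv, Gmap hsym hirr huv, GF hsym hirr huv, FG hsym hirr huv⟩
  rw [Nat.card_congr e, Nat.card_sum]


/-- number of proper colourings. -/
noncomputable def cnt (A : V → V → Prop) (N : ℕ) : ℕ :=
  Nat.card {f : V → Fin N // ∀ x y, A x y → f x ≠ f y}

/-- number of proper colourings of the deletion identifying `u` and `v`. -/
noncomputable def kcnt (A : V → V → Prop) (u v : V) (N : ℕ) : ℕ :=
  Nat.card {f : V → Fin N // (∀ x y, Del A u v x y → f x ≠ f y) ∧ f u = f v}

include huv in
theorem cnt_del [Finite V] (N : ℕ) : cnt (Del A u v) N = cnt A N + kcnt A u v N := by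
  classical
  have e : {f : V → Fin N // ∀ x y, Del A u v x y → f x ≠ f y} ≃
      ({f : V → Fin N // ∀ x y, A x y → f x ≠ f y} ⊕
        {f : V → Fin N // (∀ x y, Del A u v x y → f x ≠ f y) ∧ f u = f v}) := by
    refine ⟨fun p => if h : p.1 u = p.1 v then Sum.inr ⟨p.1, p.2, h⟩ else Sum.inl ⟨p.1, ?_⟩,
      fun z => match z with
        | Sum.inl q => ⟨q.1, fun x y hd => q.2 x y hd.1⟩
        | Sum.inr q => ⟨q.1, q.2.1⟩, ?_, ?_⟩
    · intro x y hA
      by_cases hp : (x = u ∧ y = v) ∨ (x = v ∧ y = u)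
      · rcases hp with ⟨g1, g2⟩ | ⟨g1, g2⟩
        · rw [g1, g2]; exact h
        · rw [g1, g2]; exact fun e' => h e'.symm
      · exact p.2 x y ⟨hA, hp⟩
    · intro p
      dsimp only
      by_cases h : p.1 u = p.1 v
      · rw [dif_pos h]
      · rw [dif_neg h]
    · rintro (q | q)
      · dsimp only
        rw [dif_neg (q.2 u v huv)]
      · dsimp only
        rw [dif_pos q.2.2]
  rw [cnt, Nat.card_congr e, Nat.card_sum, cnt, kcnt]

include hsym hirr huv in
theorem cnt_ctr [Finite V] (N : ℕ) : cnt (Ctr A u v) N = N * kcnt A u v N := by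
  classical
  have hnuv := uv_ne hirr huv
  have e : {f : V → Fin N // ∀ x y, Ctr A u v x y → f x ≠ f y} ≃
      (Fin N × {f : V → Fin N // (∀ x y, Del A u v x y → f x ≠ f y) ∧ f u = f v}) := by
    refine ⟨fun p => (p.1 v, ⟨fun x => if x = v then p.1 u else p.1 x, ?_, ?_⟩),
      fun q => ⟨fun x => if x = v then q.1 else q.2.1 x, ?_⟩, ?_, ?_⟩
    · intro x y hd
      have hxy := del_ne hirr hd
      have hc := ctr_pr hirr huv hd
      dsimp only
      by_cases hx : x = v <;> by_cases hy : y = v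
      · exact absurd (hx.trans hy.symm) hxy
      · rw [hx, pr_v, pr_other hy] at hc
        rw [if_pos hx, if_neg hy]
        exact p.2 u y hc
      · rw [hy, pr_v, pr_other hx] at hc
        rw [if_pos hy, if_neg hx]
        exact fun e' => p.2 u x (ctr_symm hsym hc) e'.symm
      · rw [pr_other hx, pr_other hy] at hc
        rw [if_neg hx, if_neg hy]
        exact p.2 x y hc
    · dsimp only
      rw [if_neg hnuv, if_pos rfl]
    · rintro x y ⟨hxy, hxv, hyv, hA'⟩
      dsimp only
      rw [if_neg hxv, if_neg hyv]
      rcases hA' with hA | ⟨hxu, hA⟩ | ⟨hyu, hA⟩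
      · refine q.2.2.1 x y ⟨hA, ?_⟩
        rintro (⟨_, e⟩ | ⟨e, _⟩)
        exacts [hyv e, hxv e]
      · have hd : Del A u v v y := ⟨hA, by
          rintro (⟨e1, _⟩ | ⟨_, e2⟩)
          · exact hnuv e1.symm
          · exact hxy (hxu.trans e2.symm)⟩
        rw [hxu, q.2.2.2]
        exact q.2.2.1 v y hd
      · have hd : Del A u v x v := ⟨hA, by
          rintro (⟨e1, _⟩ | ⟨_, e2⟩)
          · exact hxy (e1.trans hyu.symm)
          · exact hnuv e2.symm⟩
        rw [hyu, q.2.2.2]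
        exact q.2.2.1 x v hd
    · intro p
      apply Subtype.ext
      funext x
      dsimp only
      by_cases hx : x = v
      · rw [if_pos hx, hx]
      · rw [if_neg hx, if_neg hx]
    · intro q
      refine Prod.ext ?_ (Subtype.ext ?_)
      · dsimp only
        rw [if_pos rfl]
      · funext x
        dsimp only
        by_cases hx : x = v
        · rw [if_pos hx, if_neg hnuv, hx, ← q.2.2.2]
        · rw [if_neg hx, if_neg hx]
  rw [cnt, Nat.card_congr e, Nat.card_prod, Nat.card_eq_fintype_card, Fintype.card_fin, kcnt]

end DC

section Base

variable {A : V → V → Prop}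

theorem cnt_empty [Finite V] (h : ∀ x y, ¬ A x y) (N : ℕ) : cnt A N = N ^ Nat.card V := by
  rw [cnt, Nat.card_congr (Equiv.subtypeUnivEquiv (fun f x y hA => absurd hA (h x y))),
    Nat.card_fun, Nat.card_eq_fintype_card, Fintype.card_fin]

theorem ao_empty (h : ∀ x y, ¬ A x y) : Nat.card {r : V → V → Prop // AO A r} = 1 := by
  have hbot : AO A (fun _ _ => False) := by
    refine ⟨fun x y hA => absurd hA (h x y), fun x y hf => hf.elim, fun x hx => ?_⟩
    cases hx with
    | single h => exact h
    | tail _ h => exact h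
  haveI : Unique {r : V → V → Prop // AO A r} := by
    refine ⟨⟨⟨fun _ _ => False, hbot⟩⟩, ?_⟩
    rintro ⟨r, hr⟩
    apply Subtype.ext
    funext x y
    apply propext
    exact ⟨fun hf => absurd (hr.2.1 x y hf) (h x y), False.elim⟩
  exact Nat.card_unique

/-- the number of arcs of `A`, used as induction measure. -/
noncomputable def msr (A : V → V → Prop) : ℕ := Set.ncard {p : V × V | A p.1 p.2}

theorem msr_zero [Finite V] (h : msr A ≤ 0) : ∀ x y, ¬ A x y := by
  intro x y hA
  have h0 : msr A = 0 := Nat.le_zero.mp h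
  have h1 : 0 < ({p : V × V | A p.1 p.2}).ncard :=
    (Set.ncard_pos (Set.toFinite _)).mpr ⟨(x, y), hA⟩
  rw [msr] at h0
  omega

variable {u v : V}

theorem msr_del_lt [Finite V] (huv : A u v) : msr (Del A u v) < msr A := by
  apply Set.ncard_lt_ncard _ (Set.toFinite _)
  constructor
  · rintro ⟨x, y⟩ hp
    exact hp.1
  · intro hsub
    have h2 := hsub (show ((u, v) : V × V) ∈ {p : V × V | A p.1 p.2} from huv)
    exact h2.2 (Or.inl ⟨rfl, rfl⟩)

theorem msr_ctr_lt [Finite V] (hsym : ∀ x y, A x y → A y x) (hirr : ∀ x, ¬ A x x)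
    (huv : A u v) : msr (Ctr A u v) < msr A := by
  classical
  have hle : msr (Ctr A u v) ≤ msr (Del A u v) := by
    apply Set.ncard_le_ncard_of_injOn
      (fun p => if A p.1 p.2 then p else if p.1 = u then (v, p.2) else (p.1, v))
    · rintro ⟨x, y⟩ hp
      obtain ⟨hxy, hxv, hyv, hA'⟩ := hp
      dsimp only at *
      by_cases hA : A x y
      · rw [if_pos hA]
        refine ⟨hA, ?_⟩
        rintro (⟨_, e⟩ | ⟨e, _⟩)
        exacts [hyv e, hxv e]
      · rw [if_neg hA]
        rcases hA' with hA' | ⟨hxu, hA'⟩ | ⟨hyu, hA'⟩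
        · exact absurd hA' hA
        · rw [if_pos hxu]
          refine ⟨hA', ?_⟩
          rintro (⟨e1, _⟩ | ⟨_, e2⟩)
          · exact uv_ne hirr huv e1.symm
          · exact hxy (hxu.trans e2.symm)
        · have hxu : x ≠ u := fun e => hxy (e.trans hyu.symm)
          rw [if_neg hxu]
          refine ⟨hA', ?_⟩
          rintro (⟨e1, _⟩ | ⟨_, e2⟩)
          · exact hxu e1
          · exact uv_ne hirr huv e2.symm
    · rintro ⟨x, y⟩ hp ⟨x', y'⟩ hq hfeq
      obtain ⟨hxy, hxv, hyv, hA'⟩ := hp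
      obtain ⟨hxy', hxv', hyv', hA''⟩ := hq
      have hyu : ¬ A x y → x ≠ u → y = u := by
        intro h1 h2
        rcases hA' with hA' | ⟨hxu, _⟩ | ⟨hyu, _⟩
        exacts [absurd hA' h1, absurd hxu h2, hyu]
      have hyu' : ¬ A x' y' → x' ≠ u → y' = u := by
        intro h1 h2
        rcases hA'' with hA'' | ⟨hxu, _⟩ | ⟨hyu, _⟩
        exacts [absurd hA'' h1, absurd hxu h2, hyu]
      dsimp only at hfeq
      by_cases h1 : A x y <;> by_cases h2 : A x' y'
      · rwa [if_pos h1, if_pos h2] at hfeq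
      · rw [if_pos h1, if_neg h2] at hfeq
        by_cases h3 : x' = u
        · rw [if_pos h3] at hfeq
          exact absurd (congrArg Prod.fst hfeq) hxv
        · rw [if_neg h3] at hfeq
          exact absurd (congrArg Prod.snd hfeq) hyv
      · rw [if_neg h1, if_pos h2] at hfeq
        by_cases h3 : x = u
        · rw [if_pos h3] at hfeq
          exact absurd (congrArg Prod.fst hfeq).symm hxv'
        · rw [if_neg h3] at hfeq
          exact absurd (congrArg Prod.snd hfeq).symm hyv'
      · rw [if_neg h1, if_neg h2] at hfeq
        by_cases h3 : x = u <;> by_cases h4 : x' = u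
        · rw [if_pos h3, if_pos h4] at hfeq
          have := congrArg Prod.snd hfeq
          dsimp at this
          rw [Prod.ext_iff]
          exact ⟨h3.trans h4.symm, this⟩
        · rw [if_pos h3, if_neg h4] at hfeq
          exact absurd (congrArg Prod.fst hfeq).symm hxv'
        · rw [if_neg h3, if_pos h4] at hfeq
          exact absurd (congrArg Prod.fst hfeq) hxv
        · rw [if_neg h3, if_neg h4] at hfeq
          have e1 := congrArg Prod.fst hfeq
          dsimp at e1
          rw [Prod.ext_iff]
          exact ⟨e1, (hyu h1 h3).trans (hyu' h2 h4).symm⟩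
  exact lt_of_le_of_lt hle (msr_del_lt huv)

end Base

theorem polyext {p q : ℚ[X]} (h : ∀ N : ℕ, 1 ≤ N → p.eval (N : ℚ) = q.eval (N : ℚ)) :
    p = q := by
  have hroots : {x : ℚ | (p - q).IsRoot x}.Infinite := by
    refine Set.infinite_of_injective_forall_mem (f := fun n : ℕ => ((n + 1 : ℕ) : ℚ)) ?_ ?_
    · intro a b hab
      simp only at hab
      have : ((a + 1 : ℕ) : ℚ) = ((b + 1 : ℕ) : ℚ) := hab
      have h2 : a + 1 = b + 1 := by exact_mod_cast this
      omega
    · intro n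
      simp only [Set.mem_setOf_eq, Polynomial.IsRoot, Polynomial.eval_sub]
      rw [h (n + 1) (by omega)]
      ring
  exact sub_eq_zero.mp (Polynomial.eq_zero_of_infinite_isRoot _ hroots)

section Main

variable {A : V → V → Prop}

theorem key_empty [Finite V] (h : ∀ x y, ¬ A x y) :
    (∃ (R : ℚ[X]) (j : ℕ), ∀ N : ℕ, 1 ≤ N → R.eval (N : ℚ) = (N : ℚ) ^ j * cnt A N) ∧
    (∀ (R : ℚ[X]) (j : ℕ), (∀ N : ℕ, 1 ≤ N → R.eval (N : ℚ) = (N : ℚ) ^ j * cnt A N) →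
      R.eval (-1) = (-1) ^ (j + Nat.card V) * Nat.card {r : V → V → Prop // AO A r}) := by
  constructor
  · refine ⟨X ^ (Nat.card V), 0, ?_⟩
    intro N hN
    rw [eval_pow, eval_X, cnt_empty h, pow_zero, one_mul]
    push_cast
    rfl
  · intro R j hR
    have hRX : R = X ^ (j + Nat.card V) := by
      apply polyext
      intro N hN
      rw [eval_pow, eval_X, hR N hN, cnt_empty h, pow_add]
      push_cast
      ring
    rw [hRX, eval_pow, eval_X, ao_empty h]
    push_cast
    ring

theorem key [Finite V] : ∀ (k : ℕ) (A : V → V → Prop), msr A ≤ k →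
    (∀ x y, A x y → A y x) → (∀ x, ¬ A x x) →
    (∃ (R : ℚ[X]) (j : ℕ), ∀ N : ℕ, 1 ≤ N → R.eval (N : ℚ) = (N : ℚ) ^ j * cnt A N) ∧
    (∀ (R : ℚ[X]) (j : ℕ), (∀ N : ℕ, 1 ≤ N → R.eval (N : ℚ) = (N : ℚ) ^ j * cnt A N) →
      R.eval (-1) = (-1) ^ (j + Nat.card V) * Nat.card {r : V → V → Prop // AO A r}) := by
  intro k
  induction k with
  | zero =>
    intro A hm _ _
    exact key_empty (msr_zero hm)
  | succ k ih =>
    intro A hm hsym hirr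
    by_cases hA : ∀ x y, ¬ A x y
    · exact key_empty hA
    · push_neg at hA
      obtain ⟨u, v, huv⟩ := hA
      have hsymD : ∀ x y, Del A u v x y → Del A u v y x := by
        rintro x y ⟨h1, h2⟩
        exact ⟨hsym x y h1, by tauto⟩
      have hirrD : ∀ x, ¬ Del A u v x x := fun x h => hirr x h.1
      have hsymC : ∀ x y, Ctr A u v x y → Ctr A u v y x := fun x y h => ctr_symm hsym h
      have hirrC : ∀ x, ¬ Ctr A u v x x := fun x h => h.1 rfl
      obtain ⟨⟨RD, jD, hRD⟩, hD2⟩ := ih (Del A u v)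
        (Nat.lt_succ_iff.mp (lt_of_lt_of_le (msr_del_lt huv) hm)) hsymD hirrD
      obtain ⟨⟨RC, jC, hRC⟩, hC2⟩ := ih (Ctr A u v)
        (Nat.lt_succ_iff.mp (lt_of_lt_of_le (msr_ctr_lt hsym hirr huv) hm)) hsymC hirrC
      have hcnt1 : ∀ N : ℕ, (cnt (Del A u v) N : ℚ) = cnt A N + kcnt A u v N := by
        intro N
        rw [cnt_del huv N]
        push_cast
        ring
      have hcnt2 : ∀ N : ℕ, (cnt (Ctr A u v) N : ℚ) = N * kcnt A u v N := by
        intro N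
        rw [cnt_ctr hsym hirr huv N]
        push_cast
        ring
      constructor
      · refine ⟨X ^ (max jD jC + 1 - jD) * RD - X ^ (max jD jC - jC) * RC, max jD jC + 1, ?_⟩
        intro N hN
        have e1 : max jD jC + 1 - jD + jD = max jD jC + 1 := by omega
        have e2 : max jD jC - jC + jC = max jD jC := by omega
        rw [eval_sub, eval_mul, eval_mul, eval_pow, eval_pow, eval_X, hRD N hN, hRC N hN,
          ← mul_assoc, ← mul_assoc, ← pow_add, ← pow_add, e1, e2, hcnt1 N, hcnt2 N, pow_succ]
        ring
      · intro R j hR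
        have ea : max j jD + 1 - jD + jD = max j jD + 1 := by omega
        have eb : max j jD + 1 - j + j = max j jD + 1 := by omega
        set M := max j jD with hM
        set aa := M + 1 - jD with haa
        set bb := M + 1 - j with hbb
        set n := Nat.card V with hn
        have hS : ∀ N : ℕ, 1 ≤ N →
            (X ^ aa * RD - X ^ bb * R).eval (N : ℚ) = (N : ℚ) ^ M * cnt (Ctr A u v) N := by
          intro N hN
          rw [eval_sub, eval_mul, eval_mul, eval_pow, eval_pow, eval_X, hRD N hN, hR N hN,
            ← mul_assoc, ← mul_assoc, ← pow_add, ← pow_add, ea, eb, hcnt1 N, hcnt2 N, pow_succ]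
          ring
        have hSval := hC2 (X ^ aa * RD - X ^ bb * R) M hS
        have hRDval := hD2 RD jD hRD
        rw [eval_sub, eval_mul, eval_mul, eval_pow, eval_pow, eval_X, hRDval] at hSval
        have hao : (Nat.card {r : V → V → Prop // AO A r} : ℚ) =
            (Nat.card {r : V → V → Prop // AO (Del A u v) r} : ℚ) +
            (Nat.card {r : V → V → Prop // AO (Ctr A u v) r} : ℚ) := by
          rw [ao_split hsym hirr huv]
          push_cast
          ring
        have hpa : ((-1 : ℚ)) ^ aa * ((-1 : ℚ)) ^ (jD + n) = (-1) ^ (M + 1 + n) := by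
          rw [← pow_add]
          congr 1
          omega
        have hstep : ((-1 : ℚ)) ^ (M + 1 + n) = -((-1 : ℚ)) ^ (M + n) := by
          rw [show M + 1 + n = (M + n) + 1 by omega, pow_succ]
          ring
        rw [← mul_assoc, hpa] at hSval
        have h1 : ((-1 : ℚ)) ^ bb * R.eval (-1) =
            (-1) ^ (M + 1 + n) * (Nat.card {r : V → V → Prop // AO A r} : ℚ) := by
          have h2 : ((-1 : ℚ)) ^ bb * R.eval (-1) =
              (-1) ^ (M + 1 + n) * (Nat.card {r : V → V → Prop // AO (Del A u v) r} : ℚ)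
                - (-1) ^ (M + n) * (Nat.card {r : V → V → Prop // AO (Ctr A u v) r} : ℚ) := by
            linarith [hSval]
          rw [h2, hao, hstep]
          ring
        have hbb2 : ((-1 : ℚ)) ^ bb * ((-1 : ℚ)) ^ bb = 1 := by
          rw [← pow_add]
          exact Even.neg_one_pow ⟨bb, rfl⟩
        calc R.eval (-1) = ((-1 : ℚ) ^ bb * (-1 : ℚ) ^ bb) * R.eval (-1) := by
              rw [hbb2, one_mul]
          _ = (-1 : ℚ) ^ bb * ((-1 : ℚ) ^ bb * R.eval (-1)) := by ring
          _ = (-1 : ℚ) ^ bb * ((-1) ^ (M + 1 + n) *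
                (Nat.card {r : V → V → Prop // AO A r} : ℚ)) := by rw [h1]
          _ = ((-1 : ℚ) ^ (bb + (M + 1 + n))) *
                (Nat.card {r : V → V → Prop // AO A r} : ℚ) := by rw [pow_add]; ring
          _ = (-1) ^ (j + n) * (Nat.card {r : V → V → Prop // AO A r} : ℚ) := by
              rw [show bb + (M + 1 + n) = (bb + bb) + (j + n) by omega, pow_add,
                Even.neg_one_pow ⟨bb, rfl⟩, one_mul]

end Main

end Stanley

/-- An acyclic orientation of the simple graph `Γ(G)` associated with the hypergraph
with edge set `E`: distinct vertices are adjacent when they share an edge of `E`. -/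
def GraphAcyclicOrientation {V : Type*} (E : Set (Set V)) (r : V → V → Prop) : Prop :=
  (∀ x y : V, (x ≠ y ∧ ∃ e ∈ E, x ∈ e ∧ y ∈ e) → Xor' (r x y) (r y x)) ∧
    (∀ x y : V, r x y → (x ≠ y ∧ ∃ e ∈ E, x ∈ e ∧ y ∈ e)) ∧
    ∀ x : V, ¬ Relation.TransGen r x x

theorem stmt18 {V : Type*} [Fintype V] [Nonempty V] (E : Set (Set V))
    (hE0 : ∅ ∈ E) (hE1 : ∀ x : V, {x} ∈ E)
    (P : Polynomial ℚ)
    (hP : ∀ N : ℕ, 1 ≤ N →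
      P.eval (N : ℚ) =
        Nat.card {f : V → Fin N //
          ∀ e ∈ E, ∀ x ∈ e, ∀ y ∈ e, x ≠ y → f x ≠ f y}) :
    P.eval (-1 : ℚ) =
      (-1 : ℚ) ^ Fintype.card V *
        Nat.card {r : V → V → Prop // GraphAcyclicOrientation E r} := by
  classical
  set A : V → V → Prop := fun x y => x ≠ y ∧ ∃ e ∈ E, x ∈ e ∧ y ∈ e with hA
  have hsym : ∀ x y, A x y → A y x := by
    rintro x y ⟨h1, e, he, hx, hy⟩
    exact ⟨h1.symm, e, he, hy, hx⟩
  have hirr : ∀ x, ¬ A x x := by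
    rintro x ⟨h1, _⟩
    exact h1 rfl
  have hP' : ∀ N : ℕ, 1 ≤ N → P.eval (N : ℚ) = (N : ℚ) ^ 0 * Stanley.cnt A N := by
    intro N hN
    rw [pow_zero, one_mul, hP N hN]
    congr 1
    apply Nat.card_congr
    apply Equiv.subtypeEquivRight
    intro f
    constructor
    · intro h x y hxy
      obtain ⟨hne, e, he, hx, hy⟩ := hxy
      exact h e he x hx y hy hne
    · intro h e he x hx y hy hne
      exact h x y ⟨hne, e, he, hx, hy⟩
  have hmain := (Stanley.key (Stanley.msr A) A le_rfl hsym hirr).2 P 0 hP'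
  rw [hmain, zero_add, Nat.card_eq_fintype_card]
  have hAOiff : ∀ r : V → V → Prop, Stanley.AO A r ↔ GraphAcyclicOrientation E r :=
    fun r => Iff.rfl
  rw [show Nat.card {r : V → V → Prop // Stanley.AO A r} =
      Nat.card {r : V → V → Prop // GraphAcyclicOrientation E r} from
    Nat.card_congr (Equiv.subtypeEquivRight hAOiff)]
end

section
/- Let G be a hypergraph on a nonempty finite set V, and let P be a polynomial with rational coefficients such that for every integer N ≥ 1, P(N) equals the number of ⊂-proper N-colourings of G. Then for every i ≥ 1, the coefficient of X^i in P equals ∑_{F ⊆ E⁺(G)} (−1)^{|F|}, the sum being over those subsets F of the set of nontrivial edges of G such that the hypergraph on V whose nontrivial edges are exactly the elements of F has exactly i connected components. -/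
/-- Number of connected components of the hypergraph on `V` whose nontrivial edges are
exactly the elements of `F` (its edge set is `F ∪ {∅} ∪ {{x} : x ∈ V}`). -/
noncomputable def nccOf {V : Type*} (F : Set (Set V)) : ℕ :=
  Set.ncard {C : Set V |
    ∃ x, C = {y | hreach (F ∪ {(∅ : Set V)} ∪ Set.range (fun v : V => ({v} : Set V))) x y}}

set_option linter.unusedSectionVars false

section aux
variable {V : Type*} [Fintype V]

def fullE (F : Set (Set V)) : Set (Set V) :=
  F ∪ {(∅ : Set V)} ∪ Set.range (fun v : V => ({v} : Set V))

lemma hstep_symm (F : Set (Set V)) : Symmetric (hstep (fullE F)) := by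
  rintro x y ⟨e, he, hx, hy⟩; exact ⟨e, he, hy, hx⟩

lemma hreach_symm (F : Set (Set V)) {x y : V} (h : hreach (fullE F) x y) :
    hreach (fullE F) y x :=
  by haveI : Std.Symm (hstep (fullE F)) := ⟨hstep_symm F⟩; exact Relation.ReflTransGen.symmetric.symm _ _ h

lemma hreach_equiv (F : Set (Set V)) : Equivalence (hreach (fullE F)) :=
  ⟨fun _ => Relation.ReflTransGen.refl, hreach_symm F, fun h h' => h.trans h'⟩

noncomputable def hsetoid (F : Set (Set V)) : Setoid V := ⟨hreach (fullE F), hreach_equiv F⟩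

lemma class_eq {F : Set (Set V)} {a b : V} (h : hreach (fullE F) a b) :
    {y | hreach (fullE F) a y} = {y | hreach (fullE F) b y} := by
  ext y
  exact ⟨fun hy => (hreach_symm F h).trans hy, fun hy => h.trans hy⟩

lemma card_quot (F : Set (Set V)) : Nat.card (Quotient (hsetoid F)) = nccOf F := by
  rw [nccOf, ← Nat.card_coe_set_eq]
  refine Nat.card_eq_of_bijective
    (Quotient.lift (fun x => (⟨{y | hreach (fullE F) x y}, x, rfl⟩ :
      {C : Set V | ∃ x, C = {y | hreach (fullE F) x y}}))
      (fun a b h => Subtype.ext (class_eq h))) ⟨?_, ?_⟩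
  · rintro ⟨a⟩ ⟨b⟩ h
    have h2 : {y | hreach (fullE F) a y} = {y | hreach (fullE F) b y} :=
      congrArg Subtype.val h
    have : hreach (fullE F) a b := by
      have : b ∈ {y | hreach (fullE F) b y} := Relation.ReflTransGen.refl
      rw [← h2] at this; exact this
    exact Quotient.sound this
  · rintro ⟨C, x, rfl⟩
    exact ⟨Quotient.mk _ x, rfl⟩

lemma mono_iff_const (F : Set (Set V)) {N : ℕ} (f : V → Fin N) :
    (∀ e ∈ F, ∀ x ∈ e, ∀ y ∈ e, f x = f y) ↔
      ∀ x y, hreach (fullE F) x y → f x = f y := by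
  constructor
  · intro h x y hxy
    induction hxy with
    | refl => rfl
    | tail _ hstep ih =>
      rename_i b c _
      obtain ⟨e, he, hb, hc⟩ := hstep
      rcases he with he | he
      · rcases he with he | he
        · exact ih.trans (h e he b hb c hc)
        · simp only [Set.mem_singleton_iff] at he; subst he; exact absurd hb (Set.notMem_empty b)
      · obtain ⟨v, rfl⟩ := he
        simp only [Set.mem_singleton_iff] at hb hc
        subst hb; subst hc; exact ih
  · intro h e he x hx y hy
    exact h x y (Relation.ReflTransGen.single ⟨e, Or.inl (Or.inl he), hx, hy⟩)

lemma card_monoChrom (F : Set (Set V)) (N : ℕ) :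
    Nat.card {f : V → Fin N // ∀ e ∈ F, ∀ x ∈ e, ∀ y ∈ e, f x = f y} = N ^ nccOf F := by
  have e1 : {f : V → Fin N // ∀ e ∈ F, ∀ x ∈ e, ∀ y ∈ e, f x = f y} ≃
      (Quotient (hsetoid F) → Fin N) := by
    refine
      { toFun := fun f => Quotient.lift f.1 (fun a b h => ((mono_iff_const F f.1).1 f.2) a b h)
        invFun := fun g => ⟨fun x => g (Quotient.mk _ x), ?_⟩
        left_inv := fun f => Subtype.ext rfl
        right_inv := fun g => by funext q; induction q using Quotient.ind; rfl }
    refine (mono_iff_const F _).2 (fun x y h => ?_)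
    exact congrArg g (Quotient.sound h)
  rw [Nat.card_congr e1, Nat.card_fun, card_quot, Nat.card_eq_fintype_card, Fintype.card_fin]

end aux

open Finset Polynomial
theorem stmt19 {V : Type*} [Fintype V] [Nonempty V] (E : Set (Set V))
    (hE0 : ∅ ∈ E) (hE1 : ∀ x : V, {x} ∈ E)
    (P : Polynomial ℚ)
    (hP : ∀ N : ℕ, 1 ≤ N →
      P.eval (N : ℚ) =
        Nat.card {f : V → Fin N //
          ∀ e ∈ E, 2 ≤ e.ncard → ∃ x ∈ e, ∃ y ∈ e, f x ≠ f y}) :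
    ∀ i : ℕ, 1 ≤ i →
      P.coeff i =
        ∑ᶠ F ∈ {F : Set (Set V) | F ⊆ {e ∈ E | 2 ≤ e.ncard} ∧ nccOf F = i},
          (-1 : ℚ) ^ F.ncard := by
  classical
  set E2 : Set (Set V) := {e ∈ E | 2 ≤ e.ncard} with hE2
  set E2' : Finset (Set V) := (Set.toFinite E2).toFinset with hE2'
  set Q : Polynomial ℚ :=
    ∑ t ∈ E2'.powerset, Polynomial.C ((-1 : ℚ) ^ t.card) * Polynomial.X ^ nccOf (↑t : Set (Set V))
    with hQ
  -- counting colourings compatible with a set of monochromatic edges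
  have hcount : ∀ (N : ℕ) (t : Finset (Set V)),
      ((univ.filter (fun f : V → Fin N =>
        ∀ e ∈ (↑t : Set (Set V)), ∀ x ∈ e, ∀ y ∈ e, f x = f y)).card : ℚ)
        = (N : ℚ) ^ nccOf (↑t : Set (Set V)) := by
    intro N t
    rw [← Fintype.card_subtype, ← Nat.card_eq_fintype_card, card_monoChrom]
    push_cast
    ring
  -- P and Q agree on positive integers
  have heval : ∀ N : ℕ, 1 ≤ N → P.eval (N : ℚ) = Q.eval (N : ℚ) := by
    intro N hN
    have hQeval : Q.eval (N : ℚ) =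
        ∑ t ∈ E2'.powerset, (-1 : ℚ) ^ t.card *
          ((univ.filter (fun f : V → Fin N =>
            ∀ e ∈ (↑t : Set (Set V)), ∀ x ∈ e, ∀ y ∈ e, f x = f y)).card : ℚ) := by
      rw [hQ, Polynomial.eval_finset_sum]
      refine Finset.sum_congr rfl fun t _ => ?_
      rw [hcount N t]
      simp
    have key : ∀ f : V → Fin N,
        ((E2'.filter (fun e => ∀ x ∈ e, ∀ y ∈ e, f x = f y)) = ∅) ↔
        (∀ e ∈ E, 2 ≤ e.ncard → ∃ x ∈ e, ∃ y ∈ e, f x ≠ f y) := by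
      intro f
      rw [Finset.filter_eq_empty_iff]
      constructor
      · intro h e he hc
        have he2 : e ∈ E2' := by
          rw [hE2', Set.Finite.mem_toFinset]; exact ⟨he, hc⟩
        have := h he2
        push_neg at this
        exact this
      · intro h e he
        rw [hE2', Set.Finite.mem_toFinset] at he
        have := h e he.1 he.2
        push_neg
        exact this
    have swap : ∑ t ∈ E2'.powerset, (-1 : ℚ) ^ t.card *
          ((univ.filter (fun f : V → Fin N =>
            ∀ e ∈ (↑t : Set (Set V)), ∀ x ∈ e, ∀ y ∈ e, f x = f y)).card : ℚ)
        = ((univ.filter (fun f : V → Fin N =>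
            ∀ e ∈ E, 2 ≤ e.ncard → ∃ x ∈ e, ∃ y ∈ e, f x ≠ f y)).card : ℚ) := by
      calc ∑ t ∈ E2'.powerset, (-1 : ℚ) ^ t.card *
            ((univ.filter (fun f : V → Fin N =>
              ∀ e ∈ (↑t : Set (Set V)), ∀ x ∈ e, ∀ y ∈ e, f x = f y)).card : ℚ)
          = ∑ t ∈ E2'.powerset, ∑ f : V → Fin N,
              (if ∀ e ∈ (↑t : Set (Set V)), ∀ x ∈ e, ∀ y ∈ e, f x = f y
                then (-1 : ℚ) ^ t.card else 0) := by
            refine Finset.sum_congr rfl fun t _ => ?_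
            rw [← Finset.sum_filter, Finset.sum_const, nsmul_eq_mul, mul_comm]
        _ = ∑ f : V → Fin N, ∑ t ∈ E2'.powerset,
              (if ∀ e ∈ (↑t : Set (Set V)), ∀ x ∈ e, ∀ y ∈ e, f x = f y
                then (-1 : ℚ) ^ t.card else 0) := Finset.sum_comm
        _ = ∑ f : V → Fin N,
              ∑ t ∈ (E2'.filter (fun e => ∀ x ∈ e, ∀ y ∈ e, f x = f y)).powerset,
                (-1 : ℚ) ^ t.card := by
            refine Finset.sum_congr rfl fun f _ => ?_
            rw [← Finset.sum_filter]
            refine Finset.sum_congr ?_ fun _ _ => rfl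
            ext t
            simp only [Finset.mem_filter, Finset.mem_powerset]
            constructor
            · rintro ⟨hsub, hmono⟩ e he
              exact Finset.mem_filter.2 ⟨hsub he, hmono e (Finset.mem_coe.2 he)⟩
            · intro h
              refine ⟨fun e he => (Finset.mem_filter.1 (h he)).1, fun e he => ?_⟩
              exact (Finset.mem_filter.1 (h (Finset.mem_coe.1 he))).2
        _ = ∑ f : V → Fin N,
              (if (E2'.filter (fun e => ∀ x ∈ e, ∀ y ∈ e, f x = f y)) = ∅
                then (1 : ℚ) else 0) := by
            refine Finset.sum_congr rfl fun f _ => ?_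
            have h := Finset.sum_powerset_neg_one_pow_card
              (x := E2'.filter (fun e => ∀ x ∈ e, ∀ y ∈ e, f x = f y))
            have h2 := congrArg (fun z : ℤ => (z : ℚ)) h
            push_cast at h2
            exact h2
        _ = ∑ f : V → Fin N,
              (if ∀ e ∈ E, 2 ≤ e.ncard → ∃ x ∈ e, ∃ y ∈ e, f x ≠ f y
                then (1 : ℚ) else 0) := by
            refine Finset.sum_congr rfl fun f _ => ?_
            rw [if_congr (key f) rfl rfl]
        _ = ((univ.filter (fun f : V → Fin N =>
              ∀ e ∈ E, 2 ≤ e.ncard → ∃ x ∈ e, ∃ y ∈ e, f x ≠ f y)).card : ℚ) := by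
            rw [Finset.sum_boole]
    rw [hP N hN, hQeval, swap, ← Fintype.card_subtype, ← Nat.card_eq_fintype_card]
  -- P = Q
  have hPQ : P = Q := by
    by_contra hne
    have hsub : P - Q ≠ 0 := sub_ne_zero.2 hne
    have hroots : {x : ℚ | (P - Q).IsRoot x}.Infinite := by
      refine Set.infinite_of_injective_forall_mem
        (f := fun n : ℕ => ((n + 1 : ℕ) : ℚ)) ?_ ?_
      · intro a b hab
        have := Nat.cast_injective (R := ℚ) hab
        omega
      · intro n
        simp only [Set.mem_setOf_eq, Polynomial.IsRoot, Polynomial.eval_sub]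
        rw [heval (n + 1) (by omega)]
        ring
    exact hsub (Polynomial.eq_zero_of_infinite_isRoot _ hroots)
  -- coefficient extraction
  intro i hi
  have hQc : Q.coeff i = ∑ t ∈ E2'.powerset.filter
      (fun t : Finset (Set V) => nccOf (↑t : Set (Set V)) = i), (-1 : ℚ) ^ t.card := by
    rw [hQ, Polynomial.finset_sum_coeff, Finset.sum_filter]
    refine Finset.sum_congr rfl fun t _ => ?_
    rw [Polynomial.coeff_C_mul, Polynomial.coeff_X_pow]
    by_cases h : nccOf (↑t : Set (Set V)) = i
    · simp [h]
    · simp [h, Ne.symm h]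
  have hS : {F : Set (Set V) | F ⊆ E2 ∧ nccOf F = i}.Finite := Set.toFinite _
  rw [hPQ, hQc, finsum_mem_eq_finite_toFinset_sum _ hS]
  refine Finset.sum_nbij' (i := fun t : Finset (Set V) => (↑t : Set (Set V)))
    (j := fun F : Set (Set V) => (Set.toFinite F).toFinset) ?_ ?_ ?_ ?_ ?_
  · intro t ht
    simp only [Finset.mem_filter, Finset.mem_powerset] at ht
    rw [Set.Finite.mem_toFinset]
    refine ⟨?_, ht.2⟩
    intro e he
    have := ht.1 (Finset.mem_coe.1 he)
    rw [hE2', Set.Finite.mem_toFinset] at this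
    exact this
  · intro F hF
    rw [Set.Finite.mem_toFinset] at hF
    simp only [Finset.mem_filter, Finset.mem_powerset]
    constructor
    · intro e he
      rw [Set.Finite.mem_toFinset] at he
      rw [hE2', Set.Finite.mem_toFinset]
      exact hF.1 he
    · rw [Set.Finite.coe_toFinset]
      exact hF.2
  · intro t _
    apply Finset.coe_injective
    rw [Set.Finite.coe_toFinset]
  · intro F _
    simp only [Set.Finite.coe_toFinset]
  · intro t _
    simp only [Set.ncard_coe_finset]
end
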